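/- arXiv:1310.8622 — 8 statements merged into one kernel-verified Lean document; each statement's English description precedes it below -/
import Mathlib

section
/- Let P be a property of topological spaces that is invariant under homeomorphisms, is inherited by closed subspaces, and is preserved by finite powers (if a space satisfies P then so does each of its finite topological powers). Then for all topological spaces X and Y such that the disjoint union X ⊔ Y satisfies P, the product space X × Y satisfies P. Moreover, if in addition P is preserved by finite unions (whenever a space is the union of finitely many subspaces each satisfying P, the space satisfies P), then P is preserved by finite products: if X and Y satisfy P then so does X × Y. -/
/-! Inside the square `(X ⊕ Y) × (X ⊕ Y)`, which is homeomorphic to the power `Fin 2 → X ⊕ Y`,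
the pairs with first entry in `X` and second entry in `Y` form a copy of `X × Y`; it is closed
because both summands are clopen. For the second part, `X ⊕ Y` is the union of its two summands,
homeomorphic to `X` and `Y`. -/

open Set Topology

universe u

noncomputable def Homeomorph.prodRangeInlRangeInr (X Y : Type*) [TopologicalSpace X] [TopologicalSpace Y] :
    ↥(range (Sum.inl : X → X ⊕ Y) ×ˢ range (Sum.inr : Y → X ⊕ Y)) ≃ₜ X × Y :=
  (Homeomorph.Set.prod _ _).trans
    (IsEmbedding.inl.toHomeomorph.symm.prodCongr IsEmbedding.inr.toHomeomorph.symm)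

theorem isClosed_range_inl_prod_range_inr (X Y : Type*) [TopologicalSpace X]
    [TopologicalSpace Y] :
    IsClosed (range (Sum.inl : X → X ⊕ Y) ×ˢ range (Sum.inr : Y → X ⊕ Y)) :=
  isClosed_range_inl.prod isClosed_range_inr

theorem iUnion_range_inl_range_inr (X Y : Type*) :
    (⋃ i, ![range (Sum.inl : X → X ⊕ Y), range Sum.inr] i) = univ := by
  refine eq_univ_of_forall fun z => mem_iUnion.2 ?_
  cases z with
  | inl x => exact ⟨0, x, rfl⟩
  | inr y => exact ⟨1, y, rfl⟩

theorem prop_prod_of_prop_sum (P : ∀ (Z : Type u) [TopologicalSpace Z], Prop)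
    (hhomeo : ∀ (Z₁ Z₂ : Type u) [TopologicalSpace Z₁] [TopologicalSpace Z₂],
      Nonempty (Z₁ ≃ₜ Z₂) → P Z₁ → P Z₂)
    (hclosed : ∀ (Z : Type u) [TopologicalSpace Z] (C : Set Z), IsClosed C → P Z → P ↥C)
    (hpow : ∀ (Z : Type u) [TopologicalSpace Z] (n : ℕ), P Z → P (Fin n → Z))
    (X Y : Type u) [TopologicalSpace X] [TopologicalSpace Y] (h : P (X ⊕ Y)) : P (X × Y) := by
  have hsq : P ((X ⊕ Y) × (X ⊕ Y)) :=
    hhomeo _ _ ⟨Homeomorph.piFinTwo fun _ => X ⊕ Y⟩ (hpow _ 2 h)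
  exact hhomeo _ _ ⟨Homeomorph.prodRangeInlRangeInr X Y⟩
    (hclosed _ _ (isClosed_range_inl_prod_range_inr X Y) hsq)

theorem prop_sum_of_prop_of_finite_union (P : ∀ (Z : Type u) [TopologicalSpace Z], Prop)
    (hhomeo : ∀ (Z₁ Z₂ : Type u) [TopologicalSpace Z₁] [TopologicalSpace Z₂],
      Nonempty (Z₁ ≃ₜ Z₂) → P Z₁ → P Z₂)
    (hunion : ∀ (Z : Type u) [TopologicalSpace Z] (n : ℕ) (A : Fin n → Set Z),
      (⋃ i, A i) = univ → (∀ i, P ↥(A i)) → P Z)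
    (X Y : Type u) [TopologicalSpace X] [TopologicalSpace Y] (hX : P X) (hY : P Y) :
    P (X ⊕ Y) := by
  refine hunion _ 2 _ (iUnion_range_inl_range_inr X Y) fun i => ?_
  fin_cases i
  · exact hhomeo _ _ ⟨IsEmbedding.inl.toHomeomorph⟩ hX
  · exact hhomeo _ _ ⟨IsEmbedding.inr.toHomeomorph⟩ hY

/-- Let `P` be a property of topological spaces, invariant under homeomorphism, inherited by
closed subspaces, and preserved by finite powers. Then whenever the disjoint union `X ⊕ Y`
satisfies `P`, so does the product `X × Y`. Moreover, if `P` is also preserved by finite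
unions, then `P` is preserved by finite products. -/
theorem stmt8 (P : ∀ (Z : Type u) [TopologicalSpace Z], Prop)
    (hhomeo : ∀ (Z₁ Z₂ : Type u) [TopologicalSpace Z₁] [TopologicalSpace Z₂],
      Nonempty (Z₁ ≃ₜ Z₂) → P Z₁ → P Z₂)
    (hclosed : ∀ (Z : Type u) [TopologicalSpace Z] (C : Set Z), IsClosed C → P Z → P ↥C)
    (hpow : ∀ (Z : Type u) [TopologicalSpace Z] (n : ℕ), P Z → P (Fin n → Z)) :
    (∀ (X Y : Type u) [TopologicalSpace X] [TopologicalSpace Y],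
      P (X ⊕ Y) → P (X × Y)) ∧
    ((∀ (Z : Type u) [TopologicalSpace Z] (n : ℕ) (A : Fin n → Set Z),
        (⋃ i, A i) = Set.univ → (∀ i, P ↥(A i)) → P Z) →
      ∀ (X Y : Type u) [TopologicalSpace X] [TopologicalSpace Y],
        P X → P Y → P (X × Y)) :=
  ⟨prop_prod_of_prop_sum P hhomeo hclosed hpow,
    fun hunion X Y _ _ hX hY => prop_prod_of_prop_sum P hhomeo hclosed hpow X Y
      (prop_sum_of_prop_of_finite_union P hhomeo hunion X Y hX hY)⟩
end

section
/- Let X and Y be infinite topological spaces. Then the disjoint union X ⊔ Y is a γ-space if and only if the product space X × Y is a γ-space. -/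
open Set

universe u

/-- An ω-cover of `X`. -/
def IsOmegaCover (X : Type u) [TopologicalSpace X] (𝒰 : Set (Set X)) : Prop :=
  (∀ U ∈ 𝒰, IsOpen U) ∧ (∀ U ∈ 𝒰, ¬ (Set.univ : Set X) ⊆ U) ∧
    ∀ F : Set X, F.Finite → ∃ U ∈ 𝒰, F ⊆ U

/-- A γ-cover of `X`. -/
def IsGammaCover (X : Type u) [TopologicalSpace X] (𝒰 : Set (Set X)) : Prop :=
  𝒰.Infinite ∧ (∀ U ∈ 𝒰, IsOpen U) ∧ (∀ U ∈ 𝒰, ¬ (Set.univ : Set X) ⊆ U) ∧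
    ∀ x : X, {U ∈ 𝒰 | x ∉ U}.Finite

/-- `X` is a γ-space if every ω-cover of `X` contains a γ-cover of `X`. -/
def GammaSpace (X : Type u) [TopologicalSpace X] : Prop :=
  ∀ 𝒰 : Set (Set X), IsOmegaCover X 𝒰 → ∃ 𝒱 ⊆ 𝒰, IsGammaCover X 𝒱

/-- From a γ-space structure on `X × Y` deduce one on `X ⊕ Y`. -/
theorem gammaSum_of_gammaProd (X Y : Type u) [TopologicalSpace X] [TopologicalSpace Y]
    [Nonempty X] [Nonempty Y] (h : GammaSpace (X × Y)) : GammaSpace (X ⊕ Y) := by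
  intro 𝒰 h𝒰
  obtain ⟨hop, hnu, hfin⟩ := h𝒰
  set f : Set (X ⊕ Y) → Set (X × Y) :=
    fun U => (Sum.inl ⁻¹' U) ×ˢ (Sum.inr ⁻¹' U) with hf
  have hPomega : IsOmegaCover (X × Y) (f '' 𝒰) := by
    refine ⟨?_, ?_, ?_⟩
    · rintro _ ⟨U, hU, rfl⟩
      exact ((hop U hU).preimage continuous_inl).prod ((hop U hU).preimage continuous_inr)
    · rintro _ ⟨U, hU, rfl⟩ hcon
      refine hnu U hU (fun z _ => ?_)
      cases z with
      | inl x => exact (hcon (mem_univ (x, Classical.arbitrary Y))).1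
      | inr y => exact (hcon (mem_univ (Classical.arbitrary X, y))).2
    · intro F hF
      obtain ⟨U, hU, hsub⟩ := hfin (Sum.inl '' (Prod.fst '' F) ∪ Sum.inr '' (Prod.snd '' F))
        (((hF.image _).image _).union ((hF.image _).image _))
      refine ⟨f U, mem_image_of_mem f hU, ?_⟩
      rintro ⟨x, y⟩ hxy
      exact ⟨hsub (Or.inl ⟨x, ⟨⟨x, y⟩, hxy, rfl⟩, rfl⟩),
        hsub (Or.inr ⟨y, ⟨⟨x, y⟩, hxy, rfl⟩, rfl⟩)⟩
  obtain ⟨𝒱, h𝒱sub, h𝒱inf, h𝒱op, h𝒱nu, h𝒱γ⟩ := h (f '' 𝒰) hPomega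
  have hg : ∀ P ∈ 𝒱, ∃ U ∈ 𝒰, f U = P := fun P hP => h𝒱sub hP
  choose! g hg1 hg2 using hg
  refine ⟨g '' 𝒱, ?_, ?_, ?_, ?_, ?_⟩
  · rintro _ ⟨P, hP, rfl⟩; exact hg1 P hP
  · refine h𝒱inf.image ?_
    intro P hP Q hQ hPQ
    rw [← hg2 P hP, ← hg2 Q hQ, hPQ]
  · rintro _ ⟨P, hP, rfl⟩; exact hop _ (hg1 P hP)
  · rintro _ ⟨P, hP, rfl⟩; exact hnu _ (hg1 P hP)
  · intro z
    cases z with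
    | inl x =>
        refine ((h𝒱γ (x, Classical.arbitrary Y)).image g).subset ?_
        rintro _ ⟨⟨P, hP, rfl⟩, hxU⟩
        refine ⟨P, ⟨hP, fun hmem => hxU ?_⟩, rfl⟩
        rw [← hg2 P hP] at hmem
        exact hmem.1
    | inr y =>
        refine ((h𝒱γ (Classical.arbitrary X, y)).image g).subset ?_
        rintro _ ⟨⟨P, hP, rfl⟩, hyU⟩
        refine ⟨P, ⟨hP, fun hmem => hyU ?_⟩, rfl⟩
        rw [← hg2 P hP] at hmem
        exact hmem.2

/-- From a γ-space structure on `X ⊕ Y` deduce one on `X × Y`. -/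
theorem gammaProd_of_gammaSum (X Y : Type u) [TopologicalSpace X] [TopologicalSpace Y]
    (h : GammaSpace (X ⊕ Y)) : GammaSpace (X × Y) := by
  intro 𝒲 h𝒲
  obtain ⟨hop, hnu, hfin⟩ := h𝒲
  set 𝒰 : Set (Set (X ⊕ Y)) :=
    {S | IsOpen S ∧ ∃ W ∈ 𝒲, (Sum.inl ⁻¹' S) ×ˢ (Sum.inr ⁻¹' S) ⊆ W} with h𝒰def
  have h𝒰 : IsOmegaCover (X ⊕ Y) 𝒰 := by
    refine ⟨fun S hS => hS.1, ?_, ?_⟩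
    · rintro S ⟨_, W, hW, hsub⟩ hcon
      exact hnu W hW (fun p _ => hsub ⟨hcon (mem_univ _), hcon (mem_univ _)⟩)
    · intro G hG
      set F1 : Set X := Sum.inl ⁻¹' G with hF1def
      set F2 : Set Y := Sum.inr ⁻¹' G with hF2def
      have hF1 : F1.Finite := hG.preimage Sum.inl_injective.injOn
      have hF2 : F2.Finite := hG.preimage Sum.inr_injective.injOn
      obtain ⟨W, hW, hWsub⟩ := hfin (F1 ×ˢ F2) (hF1.prod hF2)
      have hrect : ∀ x ∈ F1, ∀ y ∈ F2, ∃ u : Set X, ∃ v : Set Y,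
          IsOpen u ∧ IsOpen v ∧ x ∈ u ∧ y ∈ v ∧ u ×ˢ v ⊆ W := by
        intro x hx y hy
        exact (isOpen_prod_iff.mp (hop W hW)) x y (hWsub ⟨hx, hy⟩)
      choose! u v hu hv hxu hyv huv using hrect
      set U : Set X := ⋃ x ∈ F1, ⋂ y ∈ F2, u x y with hUdef
      set V : Set Y := ⋃ y ∈ F2, ⋂ x ∈ F1, v x y with hVdef
      have hUopen : IsOpen U :=
        isOpen_biUnion fun x hx => hF2.isOpen_biInter fun y hy => hu x hx y hy
      have hVopen : IsOpen V :=
        isOpen_biUnion fun y hy => hF1.isOpen_biInter fun x hx => hv x hx y hy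
      have hUV : U ×ˢ V ⊆ W := by
        rintro ⟨a, b⟩ ⟨ha, hb⟩
        simp only [hUdef, hVdef, mem_iUnion, mem_iInter] at ha hb
        obtain ⟨x0, hx0, ha⟩ := ha
        obtain ⟨y0, hy0, hb⟩ := hb
        exact huv x0 hx0 y0 hy0 ⟨ha y0 hy0, hb x0 hx0⟩
      set S : Set (X ⊕ Y) := Sum.inl '' U ∪ Sum.inr '' V with hSdef
      have hSl : Sum.inl ⁻¹' S = U := by
        ext x; simp [hSdef]
      have hSr : Sum.inr ⁻¹' S = V := by
        ext y; simp [hSdef]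
      refine ⟨S, ⟨?_, W, hW, ?_⟩, ?_⟩
      · rw [isOpen_sum_iff, hSl, hSr]; exact ⟨hUopen, hVopen⟩
      · rw [hSl, hSr]; exact hUV
      · intro z hz
        cases z with
        | inl x =>
            refine Or.inl ⟨x, ?_, rfl⟩
            exact mem_biUnion hz (mem_biInter fun y hy => hxu x hz y hy)
        | inr y =>
            refine Or.inr ⟨y, ?_, rfl⟩
            exact mem_biUnion hz (mem_biInter fun x hx => hyv x hx y hz)
  obtain ⟨𝒱, h𝒱sub, h𝒱inf, _, _, h𝒱γ⟩ := h 𝒰 h𝒰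
  have hh : ∀ S ∈ 𝒱, ∃ W ∈ 𝒲, (Sum.inl ⁻¹' S) ×ˢ (Sum.inr ⁻¹' S) ⊆ W :=
    fun S hS => (h𝒱sub hS).2
  choose! t ht1 ht2 using hh
  have fiber_fin : ∀ W ∈ 𝒲, {S ∈ 𝒱 | t S = W}.Finite := by
    intro W hW
    obtain ⟨p, -, hp⟩ := not_subset.mp (hnu W hW)
    refine (((h𝒱γ (Sum.inl p.1)).union (h𝒱γ (Sum.inr p.2)))).subset ?_
    rintro S ⟨hS, hSW⟩
    by_cases h1 : Sum.inl p.1 ∈ S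
    · exact Or.inr ⟨hS, fun h2 => hp (hSW ▸ ht2 S hS ⟨h1, h2⟩)⟩
    · exact Or.inl ⟨hS, h1⟩
  refine ⟨t '' 𝒱, ?_, ?_, ?_, ?_, ?_⟩
  · rintro _ ⟨S, hS, rfl⟩; exact ht1 S hS
  · intro hfin'
    apply h𝒱inf
    have hcov : 𝒱 ⊆ ⋃ W ∈ t '' 𝒱, {S ∈ 𝒱 | t S = W} := fun S hS =>
      mem_biUnion (mem_image_of_mem t hS) ⟨hS, rfl⟩
    exact ((hfin'.biUnion (fun W hW => by
      obtain ⟨S, hS, rfl⟩ := hW; exact fiber_fin _ (ht1 S hS)))).subset hcov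
  · rintro _ ⟨S, hS, rfl⟩; exact hop _ (ht1 S hS)
  · rintro _ ⟨S, hS, rfl⟩; exact hnu _ (ht1 S hS)
  · intro p
    refine (((h𝒱γ (Sum.inl p.1)).union (h𝒱γ (Sum.inr p.2))).image t).subset ?_
    rintro _ ⟨⟨S, hS, rfl⟩, hpW⟩
    by_cases h1 : Sum.inl p.1 ∈ S
    · exact ⟨S, Or.inr ⟨hS, fun h2 => hpW (ht2 S hS ⟨h1, h2⟩)⟩, rfl⟩
    · exact ⟨S, Or.inl ⟨hS, h1⟩, rfl⟩

/-- For infinite topological spaces `X` and `Y`, the disjoint union `X ⊕ Y` is a γ-space if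
and only if the product `X × Y` is a γ-space. -/
theorem stmt9 (X Y : Type u) [TopologicalSpace X] [TopologicalSpace Y]
    [Infinite X] [Infinite Y] :
    GammaSpace (X ⊕ Y) ↔ GammaSpace (X × Y) := by
  exact ⟨gammaProd_of_gammaSum X Y, gammaSum_of_gammaProd X Y⟩
end

section
/- Let X be an infinite Tychonoff space. If the space Cp(X) is productively Fréchet–Urysohn, then X is productively γ: for every infinite Tychonoff γ-space Y, the product space X × Y is a γ-space. -/
open Set

universe u v

/-- `Cp X`: continuous real-valued functions on `X` with the topology of pointwise
convergence. -/
def Cp (X : Type u) [TopologicalSpace X] : Type u := {f : X → ℝ // Continuous f}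

instance Cp.instTopologicalSpace (X : Type u) [TopologicalSpace X] :
    TopologicalSpace (Cp X) :=
  inferInstanceAs (TopologicalSpace {f : X → ℝ // Continuous f})

/-- A space `Z` is productively Fréchet–Urysohn if `Z × W` is Fréchet–Urysohn for every
Fréchet–Urysohn topological space `W`. -/
def ProductivelyFrechetUrysohn (Z : Type u) [TopologicalSpace Z] : Prop :=
  ∀ (W : Type v) [TopologicalSpace W], FrechetUrysohnSpace W → FrechetUrysohnSpace (Z × W)

/-!
By the Gerlits–Nagy theorem, a Tychonoff space `Z` is a γ-space exactly when `Cp Z` is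
Fréchet–Urysohn. If `Y` is a γ-space, then `Cp Y` is Fréchet–Urysohn, hence so is
`Cp X × Cp Y`, and with it its subspace `Cp (X ⊕ Y)` (restriction to the two summands), so
`X ⊕ Y` is a γ-space. The γ-property passes to squares and to closed subspaces, and `X × Y` is
a closed subspace of `(X ⊕ Y) × (X ⊕ Y)`.

For `γ → Fréchet–Urysohn`, the sets where members of `A` are `1/n`-close to `f ∈ closure A`
form ω-covers (unless `A` approximates `f` uniformly), and the selection principle `S₁(Ω, Γ)`
of γ-spaces picks from them a sequence converging pointwise to `f`.
-/

open Filter Topology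

section Covers

variable {Z : Type*} [TopologicalSpace Z]

lemma IsOmegaCover.infinite {𝒰 : Set (Set Z)} (h : IsOmegaCover Z 𝒰) : Infinite Z := by
  by_contra hfin
  rw [not_infinite_iff_finite] at hfin
  obtain ⟨U, hU, huniv⟩ := h.2.2 univ finite_univ
  exact h.2.1 U hU huniv

lemma isGammaCover_range {ι : Type*} [Infinite ι] {U : ι → Set Z} (hopen : ∀ i, IsOpen (U i))
    (hproper : ∀ i, ¬ univ ⊆ U i) (hmem : ∀ z, ∀ᶠ i in cofinite, z ∈ U i) :
    IsGammaCover Z (range U) := by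
  refine ⟨fun hfin => ?_, forall_mem_range.2 hopen, forall_mem_range.2 hproper, fun z => ?_⟩
  · -- a fibre `U ⁻¹' {V}` misses any point outside `V`, so it is finite
    refine infinite_univ (α := ι) (Finite.subset (hfin.preimage' ?_) fun i _ => mem_range_self i)
    rintro _ ⟨i, rfl⟩
    obtain ⟨z, -, hz⟩ := not_subset.1 (hproper i)
    exact (hmem z).subset fun j (hj : U j = U i) => show z ∉ U j from hj ▸ hz
  · refine ((hmem z).image U).subset ?_
    rintro _ ⟨⟨i, rfl⟩, hz⟩
    exact mem_image_of_mem U hz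

lemma IsGammaCover.exists_seq {𝒱 : Set (Set Z)} (h : IsGammaCover Z 𝒱) :
    ∃ V : ℕ → Set Z, (∀ n, V n ∈ 𝒱) ∧ ∀ z, ∀ᶠ n in atTop, z ∈ V n := by
  refine ⟨fun n => h.1.natEmbedding 𝒱 n, fun n => (h.1.natEmbedding 𝒱 n).2, fun z => ?_⟩
  rw [← Nat.cofinite_eq_atTop]
  have hfin : {V : 𝒱 | z ∉ V.1}.Finite :=
    ((h.2.2.2 z).preimage Subtype.val_injective.injOn).subset fun V hV => ⟨V.2, hV⟩
  exact (h.1.natEmbedding 𝒱).injective.tendsto_cofinite.eventually hfin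

theorem gammaSpace_iff_exists_seq : GammaSpace Z ↔ ∀ 𝒰 : Set (Set Z), IsOmegaCover Z 𝒰 →
    ∃ U : ℕ → Set Z, (∀ n, U n ∈ 𝒰) ∧ ∀ z, ∀ᶠ n in atTop, z ∈ U n := by
  refine ⟨fun h 𝒰 h𝒰 => ?_, fun h 𝒰 h𝒰 => ?_⟩
  · obtain ⟨𝒱, h𝒱𝒰, h𝒱⟩ := h 𝒰 h𝒰
    obtain ⟨V, hV, hmem⟩ := h𝒱.exists_seq
    exact ⟨V, fun n => h𝒱𝒰 (hV n), hmem⟩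
  · obtain ⟨U, hU, hmem⟩ := h 𝒰 h𝒰
    refine ⟨range U, range_subset_iff.2 hU, isGammaCover_range (fun n => h𝒰.1 _ (hU n))
      (fun n => h𝒰.2.1 _ (hU n)) ?_⟩
    simpa only [Nat.cofinite_eq_atTop] using hmem

end Covers

section Permanence

variable {Z : Type*} [TopologicalSpace Z]

theorem GammaSpace.prod_self (h : GammaSpace Z) : GammaSpace (Z × Z) := by
  rw [gammaSpace_iff_exists_seq] at h ⊢
  intro 𝒲 h𝒲
  let 𝒰 : Set (Set Z) := {U | IsOpen U ∧ ∃ W ∈ 𝒲, U ×ˢ U ⊆ W}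
  have h𝒰 : IsOmegaCover Z 𝒰 := by
    refine ⟨fun U hU => hU.1, ?_, fun F hF => ?_⟩
    · rintro U ⟨-, W, hW, hUW⟩ huniv
      exact h𝒲.2.1 W hW fun p _ => hUW ⟨huniv (mem_univ p.1), huniv (mem_univ p.2)⟩
    · obtain ⟨W, hW, hFW⟩ := h𝒲.2.2 (F ×ˢ F) (hF.prod hF)
      obtain ⟨u, v, hu, hv, hFu, hFv, huv⟩ :=
        generalized_tube_lemma hF.isCompact hF.isCompact (h𝒲.1 W hW) hFW
      refine ⟨u ∩ v, ⟨hu.inter hv, W, hW, ?_⟩, subset_inter hFu hFv⟩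
      exact (prod_mono inter_subset_left inter_subset_right).trans huv
  obtain ⟨U, hU, hmem⟩ := h 𝒰 h𝒰
  choose W hW hUW using fun n => (hU n).2
  exact ⟨W, hW, fun p => ((hmem p.1).and (hmem p.2)).mono fun n hn => hUW n hn⟩

theorem GammaSpace.of_isClosedEmbedding {S : Type*} [TopologicalSpace S] {e : S → Z}
    (he : IsClosedEmbedding e) (h : GammaSpace Z) : GammaSpace S := by
  rw [gammaSpace_iff_exists_seq] at h ⊢
  intro 𝒰 h𝒰
  let 𝒲 : Set (Set Z) := {W | IsOpen W ∧ e ⁻¹' W ∈ 𝒰}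
  have h𝒲 : IsOmegaCover Z 𝒲 := by
    refine ⟨fun W hW => hW.1, fun W hW huniv => h𝒰.2.1 _ hW.2 fun s _ => huniv (mem_univ _),
      fun G hG => ?_⟩
    obtain ⟨U, hU, hGU⟩ := h𝒰.2.2 (e ⁻¹' G) (hG.preimage he.injective.injOn)
    obtain ⟨V, hV, rfl⟩ := he.isInducing.isOpen_iff.1 (h𝒰.1 U hU)
    -- enlarging `V` off the closed range of `e` does not change its preimage
    refine ⟨V ∪ (range e)ᶜ, ⟨hV.union he.isClosed_range.isOpen_compl, ?_⟩, fun z hz => ?_⟩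
    · simpa only [preimage_union, preimage_compl, preimage_range, compl_univ, union_empty]
    · by_cases hzr : z ∈ range e
      · obtain ⟨s, rfl⟩ := hzr
        exact Or.inl (hGU hz)
      · exact Or.inr hzr
  obtain ⟨W, hW, hmem⟩ := h 𝒲 h𝒲
  exact ⟨fun n => e ⁻¹' W n, fun n => (hW n).2, fun s => hmem (e s)⟩

end Permanence

instance Sum.instCompletelyRegularSpace {X Y : Type*} [TopologicalSpace X] [TopologicalSpace Y]
    [CompletelyRegularSpace X] [CompletelyRegularSpace Y] : CompletelyRegularSpace (X ⊕ Y) := by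
  rw [completelyRegularSpace_iff_isOpen]
  rintro (x | y) K hK hxK
  · obtain ⟨f, hf, hfx, hfK⟩ := CompletelyRegularSpace.completely_regular_isOpen x _
      (hK.preimage continuous_inl) hxK
    refine ⟨Sum.elim f 1, hf.sumElim continuous_const, hfx, ?_⟩
    rintro (x' | y') hK'
    exacts [hfK hK', rfl]
  · obtain ⟨f, hf, hfy, hfK⟩ := CompletelyRegularSpace.completely_regular_isOpen y _
      (hK.preimage continuous_inr) hxK
    refine ⟨Sum.elim 1 f, continuous_const.sumElim hf, hfy, ?_⟩
    rintro (x' | y') hK'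
    exacts [rfl, hfK hK']

lemma CompletelyRegularSpace.exists_continuous_eqOn_zero_eqOn_one_of_finite {Z : Type*}
    [TopologicalSpace Z] [CompletelyRegularSpace Z] {F U : Set Z} (hF : F.Finite) (hU : IsOpen U)
    (hFU : F ⊆ U) : ∃ g : Z → ℝ, Continuous g ∧ EqOn g 0 F ∧ EqOn g 1 Uᶜ := by
  choose! f hf hf0 hf1 using fun x (hx : x ∈ U) => completely_regular_isOpen x U hU hx
  refine ⟨fun z => ∏ x ∈ hF.toFinset, (f x z : ℝ), ?_, fun z hz => ?_, fun z hz => ?_⟩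
  · exact continuous_finsetProd _ fun x hx =>
      continuous_subtype_val.comp (hf x (hFU (hF.mem_toFinset.1 hx)))
  · exact Finset.prod_eq_zero (hF.mem_toFinset.2 hz) (by simp [hf0 z (hFU hz)])
  · exact Finset.prod_eq_one fun x hx => by simp [hf1 x (hFU (hF.mem_toFinset.1 hx)) hz]

namespace Cp

variable {Z : Type*} [TopologicalSpace Z]

lemma tendsto_nhds_iff {ι : Type*} {l : Filter ι} {u : ι → Cp Z} {f : Cp Z} :
    Tendsto u l (𝓝 f) ↔ ∀ z, Tendsto (fun i => (u i).1 z) l (𝓝 (f.1 z)) :=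
  (tendsto_subtype_rng (p := Continuous)).trans tendsto_pi_nhds

lemma mem_closure_iff {A : Set (Cp Z)} {f : Cp Z} : f ∈ closure A ↔
    ∀ F : Set Z, F.Finite → ∀ ε > 0, ∃ g ∈ A, ∀ z ∈ F, dist (g.1 z) (f.1 z) < ε := by
  have hbasis : (𝓝 f.1).HasBasis (fun p : Set Z × ℝ => p.1.Finite ∧ 0 < p.2)
      fun p => p.1.pi fun z => Metric.ball (f.1 z) p.2 := by
    rw [nhds_pi]
    refine Filter.hasBasis_pi_same_index (fun z => Metric.nhds_basis_ball) fun I ε hI hε => ?_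
    obtain ⟨δ, hδε, hδ⟩ := (((eventually_all_finite hI).2 fun z hz =>
      eventually_lt_nhds (hε z hz)).filter_mono nhdsWithin_le_nhds).and
        (self_mem_nhdsWithin (s := Ioi (0 : ℝ))) |>.exists
    exact ⟨δ, hδ, fun z hz => Metric.ball_subset_ball (hδε z hz).le⟩
  refine closure_subtype.trans ?_
  rw [mem_closure_iff_nhds_basis hbasis]
  simp only [Prod.forall, Set.mem_pi, Metric.mem_ball, and_imp]
  exact forall_congr' fun F => ⟨fun h hF ε hε => exists_mem_image.1 (h ε hF hε),
    fun h ε hF hε => exists_mem_image.2 (h hF ε hε)⟩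

lemma tendsto_of_eventually_dist_lt {ι : Type*} {l : Filter ι} {u : ι → Cp Z} {f : Cp Z}
    {ε : ι → ℝ} (hε : Tendsto ε l (𝓝 0)) (h : ∀ z, ∀ᶠ i in l, dist ((u i).1 z) (f.1 z) < ε i) :
    Tendsto u l (𝓝 f) :=
  tendsto_nhds_iff.2 fun z => tendsto_iff_dist_tendsto_zero.2 <|
    squeeze_zero' (.of_forall fun _ => dist_nonneg) ((h z).mono fun _ hi => hi.le) hε

def restrictSum (X Y : Type*) [TopologicalSpace X] [TopologicalSpace Y] :
    Cp (X ⊕ Y) → Cp X × Cp Y :=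
  fun f => (⟨f.1 ∘ Sum.inl, f.2.comp continuous_inl⟩, ⟨f.1 ∘ Sum.inr, f.2.comp continuous_inr⟩)

lemma isInducing_restrictSum (X Y : Type*) [TopologicalSpace X] [TopologicalSpace Y] :
    IsInducing (restrictSum X Y) := by
  refine ((IsInducing.subtypeVal.prodMap IsInducing.subtypeVal).of_comp_iff
    (f := restrictSum X Y)).1 ?_
  exact (Homeomorph.sumPiEquivProdPi X Y fun _ => ℝ).isInducing.comp IsInducing.subtypeVal

end Cp

section GerlitsNagy

variable {Z : Type*} [TopologicalSpace Z]

theorem GammaSpace.exists_eventually_mem_of_isOmegaCover [T1Space Z] (h : GammaSpace Z)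
    {𝒰 : ℕ → Set (Set Z)} (h𝒰 : ∀ n, IsOmegaCover Z (𝒰 n)) :
    ∃ U : ℕ → Set Z, (∀ n, U n ∈ 𝒰 n) ∧ ∀ z, ∀ᶠ n in atTop, z ∈ U n := by
  have := (h𝒰 0).infinite
  let y := Infinite.natEmbedding Z
  -- members of level `n` omit `y n`, so a γ-sequence in `𝒟` meets each level only finitely often
  let 𝒟 : Set (Set Z) := {D | ∃ n, ∃ g : ℕ → Set Z, (∀ i, g i ∈ 𝒰 i) ∧
    D = (⋂ i ∈ Iic n, g i) \ {y n}}
  have h𝒟 : IsOmegaCover Z 𝒟 := by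
    refine ⟨?_, ?_, fun F hF => ?_⟩
    · rintro _ ⟨n, g, hg, rfl⟩
      exact ((finite_Iic n).isOpen_biInter fun i _ => (h𝒰 i).1 _ (hg i)).sdiff isClosed_singleton
    · rintro _ ⟨n, g, hg, rfl⟩ huniv
      exact (huniv (mem_univ (y n))).2 rfl
    · choose g hg hFg using fun i => (h𝒰 i).2.2 F hF
      obtain ⟨n, hn⟩ := (hF.preimage y.injective.injOn).infinite_compl.nonempty
      refine ⟨_, ⟨n, g, hg, rfl⟩, fun z hz => ⟨mem_iInter₂.2 fun i _ => hFg i hz, ?_⟩⟩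
      rintro rfl
      exact hn hz
  obtain ⟨D, hD, hmem⟩ := (gammaSpace_iff_exists_seq.1 h) 𝒟 h𝒟
  choose lev g hg hDg using hD
  have hlev : Tendsto lev atTop atTop := by
    refine tendsto_atTop.2 fun n => ?_
    filter_upwards [(eventually_all_finite (finite_Iio n)).2 fun j _ => hmem (y j)] with k hk
    by_contra! hlt
    have := hk _ hlt
    rw [hDg k] at this
    exact this.2 rfl
  choose k hlevk hk using fun n => ((tendsto_atTop.1 hlev n).and (eventually_ge_atTop n)).exists
  refine ⟨fun n => g (k n) n, fun n => hg (k n) n, fun z => ?_⟩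
  filter_upwards [(tendsto_atTop_mono hk tendsto_id).eventually (hmem z)] with n hn
  rw [hDg] at hn
  exact mem_iInter₂.1 hn.1 n (hlevk n)

theorem frechetUrysohnSpace_cp_of_gammaSpace [T1Space Z] (h : GammaSpace Z) :
    FrechetUrysohnSpace (Cp Z) := by
  refine ⟨fun A f hf => ?_⟩
  let δ : ℕ → ℝ := fun n => 1 / ((n : ℝ) + 1)
  have hδ : Tendsto δ atTop (𝓝 0) := tendsto_one_div_add_atTop_nhds_zero_nat
  by_cases hunif : ∀ n, ∃ g ∈ A, ∀ z, dist (g.1 z) (f.1 z) < δ n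
  · choose u hu hδu using hunif
    exact ⟨u, hu, Cp.tendsto_of_eventually_dist_lt hδ fun z => .of_forall fun n => hδu n z⟩
  -- otherwise every `g ∈ A` is somewhere `δ N`-far from `f`, so the sets where some `g ∈ A` is
  -- `δ (n + N)`-close to `f` form, for each `n`, an ω-cover
  push Not at hunif
  obtain ⟨N, hN⟩ := hunif
  let 𝒰 : ℕ → Set (Set Z) :=
    fun n => {U | ∃ g ∈ A, U = {z | dist (g.1 z) (f.1 z) < δ (n + N)}}
  have h𝒰 : ∀ n, IsOmegaCover Z (𝒰 n) := by
    refine fun n => ⟨?_, ?_, fun F hF => ?_⟩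
    · rintro _ ⟨g, -, rfl⟩
      exact isOpen_lt (g.2.dist f.2) continuous_const
    · rintro _ ⟨g, hg, rfl⟩ huniv
      obtain ⟨z, hz⟩ := hN g hg
      exact (huniv (mem_univ z)).not_ge ((Nat.one_div_le_one_div (Nat.le_add_left N n)).trans hz)
    · obtain ⟨g, hg, hgF⟩ := Cp.mem_closure_iff.1 hf F hF _ Nat.one_div_pos_of_nat
      exact ⟨_, ⟨g, hg, rfl⟩, hgF⟩
  obtain ⟨U, hU, hmem⟩ := h.exists_eventually_mem_of_isOmegaCover h𝒰
  choose u hu hUu using hU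
  refine ⟨u, hu, Cp.tendsto_of_eventually_dist_lt ((tendsto_add_atTop_iff_nat N).2 hδ) fun z => ?_⟩
  filter_upwards [hmem z] with n hn
  rwa [hUu] at hn

theorem gammaSpace_of_frechetUrysohnSpace_cp [CompletelyRegularSpace Z]
    [FrechetUrysohnSpace (Cp Z)] : GammaSpace Z := by
  rw [gammaSpace_iff_exists_seq]
  intro 𝒰 h𝒰
  let A : Set (Cp Z) := {g | ∃ U ∈ 𝒰, EqOn g.1 1 Uᶜ}
  have hzero : (⟨0, continuous_const⟩ : Cp Z) ∈ closure A := by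
    refine Cp.mem_closure_iff.2 fun F hF ε hε => ?_
    obtain ⟨U, hU, hFU⟩ := h𝒰.2.2 F hF
    obtain ⟨g, hg, hg0, hg1⟩ :=
      CompletelyRegularSpace.exists_continuous_eqOn_zero_eqOn_one_of_finite hF (h𝒰.1 U hU) hFU
    exact ⟨⟨g, hg⟩, ⟨U, hU, hg1⟩, fun z hz => by simpa [hg0 hz] using hε⟩
  obtain ⟨u, huA, hu⟩ := (mem_closure_iff_seq_limit (X := Cp Z)).1 hzero
  choose U hU hu1 using huA
  refine ⟨U, hU, fun z => ?_⟩
  -- `u n z → 0`, while `u n z = 1` whenever `z ∉ U n`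
  filter_upwards [Cp.tendsto_nhds_iff.1 hu z |>.eventually (Metric.ball_mem_nhds _ one_pos)]
    with n hn
  by_contra hz
  simp [hu1 n hz] at hn

end GerlitsNagy

theorem stmt10_general (X : Type u) [TopologicalSpace X] [T35Space X]
    (h : ProductivelyFrechetUrysohn.{u, v} (Cp X)) :
    ∀ (Y : Type v) [TopologicalSpace Y] [T35Space Y] [Infinite Y],
      GammaSpace Y → GammaSpace (X × Y) := by
  intro Y _ _ _ hY
  have : FrechetUrysohnSpace (Cp X × Cp Y) := h (Cp Y) (frechetUrysohnSpace_cp_of_gammaSpace hY)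
  have : FrechetUrysohnSpace (Cp (X ⊕ Y)) := (Cp.isInducing_restrictSum X Y).frechetUrysohnSpace
  exact (gammaSpace_of_frechetUrysohnSpace_cp (Z := X ⊕ Y)).prod_self.of_isClosedEmbedding
    (IsClosedEmbedding.inl.prodMap IsClosedEmbedding.inr)

/-- If `X` is an infinite Tychonoff space and `Cp(X)` is productively Fréchet–Urysohn, then
`X` is productively γ: `X × Y` is a γ-space for every infinite Tychonoff γ-space `Y`. -/
theorem stmt10 (X : Type u) [TopologicalSpace X] [T35Space X] [Infinite X]
    (h : ProductivelyFrechetUrysohn.{u, v} (Cp X)) :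
    ∀ (Y : Type v) [TopologicalSpace Y] [T35Space Y] [Infinite Y],
      GammaSpace Y → GammaSpace (X × Y) :=
  stmt10_general X h
end

section
/- Let p be a Silver condition and 𝒰 an ω-cover of Q⁰(p). For each n ∈ ℕ, there are U ∈ 𝒰 and a Silver condition q ≤ₙ* p such that [q] ⊆ U. -/
open Set

/-- The domain of a condition, viewed as a set of pairs. -/
def sDom (p : Set (ℕ × Bool)) : Set ℕ := {n | ∃ b, (n, b) ∈ p}

/-- A Silver condition: a partial function `ℕ → {0,1}` (coded as a functional set of pairs)
whose domain has infinite complement. -/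
def IsSilver (p : Set (ℕ × Bool)) : Prop :=
  (∀ ⦃n : ℕ⦄ ⦃b b' : Bool⦄, (n, b) ∈ p → (n, b') ∈ p → b = b') ∧ ((sDom p)ᶜ).Infinite

/-- `q ≤ₙ p`: `q` extends `p` and the first `n` elements of `ℕ ∖ dom(q)` coincide with the
first `n` elements of `ℕ ∖ dom(p)`. -/
def SLEn (n : ℕ) (q p : Set (ℕ × Bool)) : Prop :=
  p ⊆ q ∧ ∀ i < n, Nat.nth (· ∈ (sDom q)ᶜ) i = Nat.nth (· ∈ (sDom p)ᶜ) i

/-- `q ≤ₙ* p`: `q ≤ₙ p` and `q` is identically zero on `dom(q) ∖ dom(p)`. -/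
def SLEnStar (n : ℕ) (q p : Set (ℕ × Bool)) : Prop :=
  SLEn n q p ∧ ∀ k ∈ sDom q \ sDom p, (k, true) ∉ q

/-- `[p] = {x ∈ 2^ℕ : p ⊆ x}`. -/
def cyl (p : Set (ℕ × Bool)) : Set (ℕ → Bool) := {x | ∀ ⦃n : ℕ⦄ ⦃b : Bool⦄, (n, b) ∈ p → x n = b}

/-- `Q⁰(p)`: the elements of `[p]` that are `0` at all but finitely many coordinates outside
`dom(p)`. -/
def Qzero (p : Set (ℕ × Bool)) : Set (ℕ → Bool) :=
  {x ∈ cyl p | {k | k ∈ (sDom p)ᶜ ∧ x k = true}.Finite}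

/-- An ω-cover of a subset `Q` of `2^ℕ`: a family of open subsets of `2^ℕ`, none containing
`Q`, such that every finite subset of `Q` is contained in some member. -/
def IsOmegaCoverOf (Q : Set (ℕ → Bool)) (𝒰 : Set (Set (ℕ → Bool))) : Prop :=
  (∀ U ∈ 𝒰, IsOpen U) ∧ (∀ U ∈ 𝒰, ¬ Q ⊆ U) ∧ ∀ F ⊆ Q, F.Finite → ∃ U ∈ 𝒰, F ⊆ U


/-- In the product space `ℕ → Bool`, every open set containing `x` contains a basic
neighborhood determined by the coordinates below some `m`. -/
lemma exists_mod_of_isOpen {U : Set (ℕ → Bool)} (hU : IsOpen U) {x : ℕ → Bool}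
    (hx : x ∈ U) : ∃ m : ℕ, ∀ y : ℕ → Bool, (∀ k < m, y k = x k) → y ∈ U := by
  rw [isOpen_pi_iff] at hU
  obtain ⟨I, u, h1, h2⟩ := hU x hx
  refine ⟨I.sup id + 1, fun y hy => h2 ?_⟩
  intro a ha
  have : y a = x a := hy a (Nat.lt_succ_of_le (Finset.le_sup (f := id) ha))
  rw [this]
  exact (h1 a ha).2

/-- For a Silver condition `p` and an ω-cover `𝒰` of `Q⁰(p)`, for each `n` there are
`U ∈ 𝒰` and `q ≤ₙ* p` with `[q] ⊆ U`. -/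
theorem stmt13 (p : Set (ℕ × Bool)) (hp : IsSilver p)
    (𝒰 : Set (Set (ℕ → Bool))) (h𝒰 : IsOmegaCoverOf (Qzero p) 𝒰) (n : ℕ) :
    ∃ U ∈ 𝒰, ∃ q, IsSilver q ∧ SLEnStar n q p ∧ cyl q ⊆ U := by
  classical
  set C : Set ℕ := (sDom p)ᶜ with hCdef
  have hCinf : C.Infinite := hp.2
  set a : ℕ → ℕ := fun i => Nat.nth (· ∈ C) i with hadef
  have haC : ∀ i, a i ∈ C := fun i => Nat.nth_mem_of_infinite hCinf i
  set A : Finset ℕ := (Finset.range n).image a with hAdef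
  have hAC : ∀ k ∈ A, k ∈ C := by
    intro k hk
    obtain ⟨i, _, rfl⟩ := Finset.mem_image.mp hk
    exact haC i
  -- the finite "test" family
  set X : Finset ℕ → (ℕ → Bool) := fun S k => if (k, true) ∈ p then true else decide (k ∈ S)
    with hXdef
  have hXQ : ∀ S : Finset ℕ, S ⊆ A → X S ∈ Qzero p := by
    intro S hS
    constructor
    · intro k b hkb
      by_cases h : (k, true) ∈ p
      · have hb : b = true := hp.1 hkb h
        simp [hXdef, h, hb]
      · have hb : b = false := by
          cases b with
          | false => rfl
          | true => exact absurd hkb h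
        have hkS : k ∉ S := fun hkS => hAC k (hS hkS) ⟨b, hkb⟩
        simp [hXdef, h, hb, hkS]
    · apply Set.Finite.subset S.finite_toSet
      rintro k ⟨hkC, hkX⟩
      have h : (k, true) ∉ p := fun h => hkC ⟨true, h⟩
      simp only [hXdef, if_neg h, decide_eq_true_eq] at hkX
      exact hkX
  have hpow : {S : Finset ℕ | S ⊆ A}.Finite := by
    have : {S : Finset ℕ | S ⊆ A} = ↑A.powerset := by
      ext S; simp [Finset.mem_powerset]
    rw [this]; exact A.powerset.finite_toSet
  have hFQ : X '' {S : Finset ℕ | S ⊆ A} ⊆ Qzero p := by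
    rintro _ ⟨S, hS, rfl⟩; exact hXQ S hS
  obtain ⟨U, hU𝒰, hFU⟩ := h𝒰.2.2 _ hFQ (hpow.image X)
  have hUopen : IsOpen U := h𝒰.1 U hU𝒰
  -- uniform modulus
  set P : Finset ℕ → ℕ → Prop := fun S m => ∀ y : ℕ → Bool, (∀ k < m, y k = X S k) → y ∈ U
    with hPdef
  have hP : ∀ S : Finset ℕ, S ⊆ A → ∃ m, P S m := fun S hS =>
    exists_mod_of_isOpen hUopen (hFU ⟨S, hS, rfl⟩)
  set g : Finset ℕ → ℕ := fun S => if h : ∃ m, P S m then h.choose else 0 with hgdef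
  set m : ℕ := A.powerset.sup g + (A.sup id + 1) with hmdef
  have hAm : ∀ k ∈ A, k < m := by
    intro k hk
    have : k ≤ A.sup id := Finset.le_sup (f := id) hk
    omega
  have hPmono : ∀ S m₁ m₂, m₁ ≤ m₂ → P S m₁ → P S m₂ := by
    intro S m₁ m₂ hle h y hy
    exact h y fun k hk => hy k (lt_of_lt_of_le hk hle)
  have hPm : ∀ S : Finset ℕ, S ⊆ A → P S m := by
    intro S hS
    have hex : ∃ m, P S m := hP S hS
    have h1 : P S (g S) := by
      rw [hgdef]; simp only [dif_pos hex]; exact hex.choose_spec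
    have h2 : g S ≤ m := le_trans (Finset.le_sup (Finset.mem_powerset.mpr hS)) (by omega)
    exact hPmono S (g S) m h2 h1
  -- the condition q
  set q : Set (ℕ × Bool) :=
    p ∪ {kb : ℕ × Bool | kb.2 = false ∧ kb.1 < m ∧ kb.1 ∈ C ∧ kb.1 ∉ A} with hqdef
  have hdq : ∀ k, k ∈ sDom q ↔ k ∈ sDom p ∨ (k < m ∧ k ∈ C ∧ k ∉ A) := by
    intro k
    constructor
    · rintro ⟨b, hb | hb⟩
      · exact Or.inl ⟨b, hb⟩
      · exact Or.inr ⟨hb.2.1, hb.2.2.1, hb.2.2.2⟩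
    · rintro (⟨b, hb⟩ | h)
      · exact ⟨b, Or.inl hb⟩
      · exact ⟨false, Or.inr ⟨rfl, h⟩⟩
  have hqc : ∀ k, k ∈ (sDom q)ᶜ ↔ k ∈ C ∧ (m ≤ k ∨ k ∈ A) := by
    intro k
    rw [Set.mem_compl_iff, hdq]
    constructor
    · intro h
      have hkC : k ∈ C := fun hh => h (Or.inl hh)
      refine ⟨hkC, ?_⟩
      by_cases hA : k ∈ A
      · exact Or.inr hA
      · left
        by_contra hlt
        exact h (Or.inr ⟨by omega, hkC, hA⟩)
    · rintro ⟨hkC, hor⟩ (hd | hd)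
      · exact hkC hd
      · rcases hor with h | h
        · omega
        · exact hd.2.2 h
  have hsilverq : IsSilver q := by
    constructor
    · rintro k b b' (hb | hb) (hb' | hb')
      · exact hp.1 hb hb'
      · exact absurd (⟨b, hb⟩ : k ∈ sDom p) hb'.2.2.1
      · exact absurd (⟨b', hb'⟩ : k ∈ sDom p) hb.2.2.1
      · exact hb.1.trans hb'.1.symm
    · apply Set.Infinite.mono (s := C \ {k | k < m})
      · intro k hk
        exact (hqc k).mpr ⟨hk.1, Or.inl (by simpa using hk.2)⟩
      · exact hCinf.diff (Set.finite_lt_nat m)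
  have hnth : ∀ i < n, Nat.nth (· ∈ (sDom q)ᶜ) i = Nat.nth (· ∈ C) i := by
    intro i hi
    have hiA : a i ∈ A := Finset.mem_image.mpr ⟨i, Finset.mem_range.mpr hi, rfl⟩
    have hmemq : a i ∈ (sDom q)ᶜ := (hqc _).mpr ⟨haC i, Or.inr hiA⟩
    have hcount : Nat.count (· ∈ (sDom q)ᶜ) (a i) = Nat.count (· ∈ C) (a i) := by
      rw [Nat.count_eq_card_filter_range, Nat.count_eq_card_filter_range]
      congr 1
      apply Finset.filter_congr
      intro k hk
      have hklt : k < a i := Finset.mem_range.mp hk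
      constructor
      · intro h
        exact ((hqc k).mp h).1
      · intro hkC
        have hnthk : Nat.nth (· ∈ C) (Nat.count (· ∈ C) k) = k := Nat.nth_count hkC
        have hcountlt : Nat.count (· ∈ C) k < i := by
          have : Nat.nth (· ∈ C) (Nat.count (· ∈ C) k) < Nat.nth (· ∈ C) i := by
            rw [hnthk]; exact hklt
          exact (Nat.nth_lt_nth hCinf).mp this
        refine (hqc k).mpr ⟨hkC, Or.inr ?_⟩
        exact Finset.mem_image.mpr ⟨Nat.count (· ∈ C) k, Finset.mem_range.mpr
          (hcountlt.trans hi), hnthk⟩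
    have h1 : Nat.nth (· ∈ (sDom q)ᶜ) (Nat.count (· ∈ (sDom q)ᶜ) (a i)) = a i :=
      Nat.nth_count hmemq
    have h2 : Nat.count (· ∈ C) (a i) = i := Nat.count_nth_of_infinite hCinf i
    rw [hcount, h2] at h1
    rw [h1]
  have hstar : SLEnStar n q p := by
    refine ⟨⟨Set.subset_union_left, hnth⟩, ?_⟩
    rintro k ⟨hkq, hkp⟩ (h | h)
    · exact hkp ⟨true, h⟩
    · exact Bool.noConfusion h.1
  have hcyl : cyl q ⊆ U := by
    intro x hx
    set S : Finset ℕ := A.filter (fun k => x k = true) with hSdef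
    have hS : S ⊆ A := Finset.filter_subset _ _
    apply hPm S hS x
    intro k hk
    by_cases h1 : (k, true) ∈ p
    · have : x k = true := hx (Or.inl h1)
      simp [hXdef, h1, this]
    by_cases h2 : k ∈ sDom p
    · obtain ⟨b, hb⟩ := h2
      have hbf : b = false := by
        cases b with
        | false => rfl
        | true => exact absurd hb h1
      have hxk : x k = false := by rw [← hbf]; exact hx (Or.inl hb)
      have hkS : k ∉ S := by
        intro hkS
        exact (hAC k (hS hkS)) ⟨b, hb⟩
      simp [hXdef, h1, hxk, hkS]
    have hkC : k ∈ C := h2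
    by_cases h3 : k ∈ A
    · have hkSiff : k ∈ S ↔ x k = true := by
        rw [hSdef, Finset.mem_filter]
        exact ⟨fun h => h.2, fun h => ⟨h3, h⟩⟩
      simp only [hXdef, if_neg h1]
      cases hxk : x k with
      | true => simp [hkSiff.mpr hxk]
      | false =>
        have : k ∉ S := fun h => by rw [hkSiff.mp h] at hxk; exact Bool.noConfusion hxk
        simp [this]
    · have hxk : x k = false := hx (Or.inr ⟨rfl, hk, hkC, h3⟩)
      have hkS : k ∉ S := fun h => h3 (hS h)
      simp [hXdef, h1, hxk, hkS]
  exact ⟨U, hU𝒰, q, hsilverq, hstar, hcyl⟩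
end

section
/- Let N ∈ ℕ, let p_0, …, p_{N−1} be Silver conditions, let k_0, …, k_{N−1} ∈ ℕ, and let 𝒰 be an ω-cover of ⋃_{n<N} Q⁰(p_n). Then there are U ∈ 𝒰 and Silver conditions q_n ≤_{k_n}* p_n for n < N such that ⋃_{n<N} [q_n] ⊆ U. -/
open Set

lemma nth_eq_of_subset {A A' : Set ℕ} (hA : A.Infinite) (h1 : A' ⊆ A)
    {i : ℕ} (h2 : ∀ j ≤ i, Nat.nth (· ∈ A) j ∈ A') :
    Nat.nth (· ∈ A') i = Nat.nth (· ∈ A) i := by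
  classical
  set m := Nat.nth (· ∈ A) i with hm
  have hmA' : m ∈ A' := h2 i le_rfl
  have hcc : Nat.count (· ∈ A') m = Nat.count (· ∈ A) m := by
    rw [Nat.count_eq_card_filter_range, Nat.count_eq_card_filter_range]
    congr 1
    apply Finset.filter_congr
    intro x hx
    simp only [Finset.mem_range] at hx
    constructor
    · intro h; exact h1 h
    · intro hxA
      have hx1 : Nat.nth (· ∈ A) (Nat.count (· ∈ A) x) = x := Nat.nth_count hxA
      have hle : Nat.count (· ∈ A) x ≤ i := by
        by_contra hlt
        push_neg at hlt
        have := Nat.nth_monotone (p := (· ∈ A)) hA hlt.le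
        rw [hx1] at this
        omega
      rw [← hx1]
      exact h2 _ hle
  have hcm : Nat.count (· ∈ A) m = i := Nat.count_nth_of_infinite (p := (· ∈ A)) hA i
  have hfin := Nat.nth_count (p := (· ∈ A')) hmA'
  rw [hcc, hcm] at hfin
  exact hfin

noncomputable def pVal (p : Set (ℕ × Bool)) (m : ℕ) : Bool :=
  @dite _ (∃ b, (m, b) ∈ p) (Classical.dec _) (fun h => h.choose) (fun _ => false)

lemma pVal_mem {p : Set (ℕ × Bool)} {m : ℕ} (h : ∃ b, (m, b) ∈ p) : (m, pVal p m) ∈ p := by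
  rw [pVal, dif_pos h]
  exact h.choose_spec

noncomputable def yfun (p : Set (ℕ × Bool)) {kn : ℕ} (σ : Fin kn → Bool) (m : ℕ) : Bool :=
  @dite _ (m ∈ sDom p) (Classical.dec _) (fun _ => pVal p m)
    (fun _ => @dite _ (∃ i : Fin kn, Nat.nth (· ∈ (sDom p)ᶜ) i = m) (Classical.dec _)
      (fun h2 => σ h2.choose) (fun _ => false))

lemma yfun_pos {p : Set (ℕ × Bool)} {kn : ℕ} (σ : Fin kn → Bool) {m : ℕ}
    (h : m ∈ sDom p) : yfun p σ m = pVal p m := dif_pos h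

lemma yfun_nth {p : Set (ℕ × Bool)} {kn : ℕ} (σ : Fin kn → Bool) {m : ℕ}
    (h : m ∉ sDom p) (h2 : ∃ i : Fin kn, Nat.nth (· ∈ (sDom p)ᶜ) i = m) :
    ∃ i : Fin kn, Nat.nth (· ∈ (sDom p)ᶜ) i = m ∧ yfun p σ m = σ i :=
  ⟨h2.choose, h2.choose_spec, (dif_neg h).trans (dif_pos h2)⟩

lemma yfun_neg {p : Set (ℕ × Bool)} {kn : ℕ} (σ : Fin kn → Bool) {m : ℕ}
    (h : m ∉ sDom p) (h2 : ¬ ∃ i : Fin kn, Nat.nth (· ∈ (sDom p)ᶜ) i = m) :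
    yfun p σ m = false := (dif_neg h).trans (dif_neg h2)

/-- For Silver conditions `p_0, …, p_{N-1}`, numbers `k_0, …, k_{N-1}`, and an ω-cover `𝒰`
of `⋃_{n<N} Q⁰(p_n)`, there are `U ∈ 𝒰` and `q_n ≤_{k_n}* p_n` with `⋃_{n<N} [q_n] ⊆ U`. -/
theorem stmt14 (N : ℕ) (p : Fin N → Set (ℕ × Bool)) (k : Fin N → ℕ)
    (hp : ∀ n, IsSilver (p n))
    (𝒰 : Set (Set (ℕ → Bool))) (h𝒰 : IsOmegaCoverOf (⋃ n, Qzero (p n)) 𝒰) :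
    ∃ U ∈ 𝒰, ∃ q : Fin N → Set (ℕ × Bool),
      (∀ n, IsSilver (q n) ∧ SLEnStar (k n) (q n) (p n)) ∧ (⋃ n, cyl (q n)) ⊆ U := by
  classical
  -- each `yfun (p n) σ` lies in `Qzero (p n)`
  have hyQ : ∀ (n : Fin N) (σ : Fin (k n) → Bool), yfun (p n) σ ∈ Qzero (p n) := by
    intro n σ
    constructor
    · intro m b hb
      have hd : m ∈ sDom (p n) := ⟨b, hb⟩
      rw [yfun_pos σ hd]
      exact (hp n).1 (pVal_mem hd) hb
    · apply Set.Finite.subset (Set.finite_range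
        (fun i : Fin (k n) => Nat.nth (· ∈ (sDom (p n))ᶜ) i))
      rintro m ⟨hm1, hm2⟩
      by_cases h2 : ∃ i : Fin (k n), Nat.nth (· ∈ (sDom (p n))ᶜ) i = m
      · obtain ⟨i, hi⟩ := h2
        exact ⟨i, hi⟩
      · rw [yfun_neg σ hm1 h2] at hm2
        exact absurd hm2 (by simp)
  -- the finite set of all these points
  set F : Set (ℕ → Bool) :=
    Set.range (fun t : (Σ n : Fin N, (Fin (k n) → Bool)) => yfun (p t.1) t.2) with hF
  have hFfin : F.Finite := Set.finite_range _
  have hFsub : F ⊆ ⋃ n, Qzero (p n) := by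
    rintro x ⟨⟨n, σ⟩, rfl⟩
    exact Set.mem_iUnion.2 ⟨n, hyQ n σ⟩
  obtain ⟨U, hU𝒰, hFU⟩ := h𝒰.2.2 F hFsub hFfin
  have hopen : IsOpen U := h𝒰.1 U hU𝒰
  -- finite supports from openness
  have key : ∀ (n : Fin N) (σ : Fin (k n) → Bool), ∃ I : Finset ℕ,
      ∀ x : ℕ → Bool, (∀ m ∈ I, x m = yfun (p n) σ m) → x ∈ U := by
    intro n σ
    obtain ⟨I, u, h1, h2⟩ := isOpen_pi_iff.mp hopen (yfun (p n) σ) (hFU ⟨⟨n, σ⟩, rfl⟩)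
    refine ⟨I, fun x hx => h2 fun m hm => ?_⟩
    rw [hx m hm]
    exact (h1 m hm).2
  choose I hI using key
  -- the frozen coordinates
  set S : Fin N → Set ℕ := fun n =>
    (⋃ σ : Fin (k n) → Bool, (I n σ : Set ℕ)) ∩ (sDom (p n))ᶜ ∩
      {m | ∀ i : Fin (k n), Nat.nth (· ∈ (sDom (p n))ᶜ) i ≠ m} with hSdef
  have hSfin : ∀ n, (S n).Finite := by
    intro n
    apply Set.Finite.subset (Set.finite_iUnion (fun σ : Fin (k n) → Bool => (I n σ).finite_toSet))
    rintro m ⟨⟨hm, _⟩, _⟩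
    exact hm
  have hSA : ∀ n, S n ⊆ (sDom (p n))ᶜ := by
    rintro n m ⟨⟨_, hm⟩, _⟩
    exact hm
  set q : Fin N → Set (ℕ × Bool) := fun n => p n ∪ (fun m => (m, false)) '' S n with hq
  have hpq : ∀ n, p n ⊆ q n := fun n => Set.subset_union_left
  have hdom : ∀ n, sDom (q n) = sDom (p n) ∪ S n := by
    intro n
    ext m
    constructor
    · rintro ⟨b, hb | ⟨m', hm', hmeq⟩⟩
      · exact Or.inl ⟨b, hb⟩
      · cases hmeq
        exact Or.inr hm'
    · rintro (⟨b, hb⟩ | hm)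
      · exact ⟨b, Or.inl hb⟩
      · exact ⟨false, Or.inr ⟨m, hm, rfl⟩⟩
  have hcompl : ∀ n, (sDom (q n))ᶜ = (sDom (p n))ᶜ \ S n := by
    intro n
    rw [hdom n, Set.compl_union, Set.diff_eq]
  refine ⟨U, hU𝒰, q, fun n => ⟨⟨?_, ?_⟩, ⟨⟨hpq n, ?_⟩, ?_⟩⟩, ?_⟩
  · -- functionality
    rintro m b b' (hb | ⟨m1, hm1, he1⟩) (hb' | ⟨m2, hm2, he2⟩)
    · exact (hp n).1 hb hb'
    · cases he2
      exact absurd ⟨b, hb⟩ (hSA n hm2)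
    · cases he1
      exact absurd ⟨b', hb'⟩ (hSA n hm1)
    · cases he1; cases he2; rfl
  · -- infinite complement
    rw [hcompl n]
    exact (hp n).2.diff (hSfin n)
  · -- nth agreement
    intro i hi
    apply nth_eq_of_subset (hp n).2
    · rw [hcompl n]
      exact Set.diff_subset
    · intro j hj
      rw [hcompl n]
      refine ⟨Nat.nth_mem_of_infinite (p := (· ∈ (sDom (p n))ᶜ)) (hp n).2 j, ?_⟩
      rintro ⟨-, hnth⟩
      exact hnth ⟨j, lt_of_le_of_lt hj hi⟩ rfl
  · -- zero on new coordinates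
    rintro m ⟨hmq, hmp⟩ (hmem | ⟨m', hm', he⟩)
    · exact hmp ⟨true, hmem⟩
    · exact Bool.noConfusion (congrArg Prod.snd he)
  · -- union of cylinders inside U
    intro x hx
    obtain ⟨n, hxn⟩ := Set.mem_iUnion.mp hx
    set σ : Fin (k n) → Bool := fun i => x (Nat.nth (· ∈ (sDom (p n))ᶜ) i) with hσ
    apply hI n σ x
    intro m hm
    by_cases hdm : m ∈ sDom (p n)
    · rw [yfun_pos σ hdm]
      exact hxn (hpq n (pVal_mem hdm))
    · by_cases h2 : ∃ i : Fin (k n), Nat.nth (· ∈ (sDom (p n))ᶜ) i = m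
      · obtain ⟨i, hieq, hy⟩ := yfun_nth σ hdm h2
        rw [hy, hσ]
        simp only
        rw [hieq]
      · have hmS : m ∈ S n :=
          ⟨⟨Set.mem_iUnion.2 ⟨σ, hm⟩, hdm⟩, fun i hc => h2 ⟨i, hc⟩⟩
        rw [yfun_neg σ hdm h2]
        exact hxn (Or.inr ⟨m, hmS, rfl⟩)
end

section
/- Let ⟨(p_n, k_n)⟩_{n∈ℕ} be a sequence of pairs consisting of a Silver condition and a natural number, let Q = ⋃_{n∈ℕ} Q⁰(p_n), and let ⟨𝒰_n⟩_{n∈ℕ} be a sequence of ω-covers of Q. Then there exist sets U_m ∈ 𝒰_m for m ∈ ℕ and Silver conditions q_n ≤_{k_n} p_n for n ∈ ℕ such that [q_n] ⊆ U_m whenever m ≥ n. -/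
open Set

lemma count_congr_lt {p q : ℕ → Prop} [DecidablePred p] [DecidablePred q] {a : ℕ}
    (h : ∀ x < a, (p x ↔ q x)) : Nat.count p a = Nat.count q a := by
  induction a with
  | zero => simp
  | succ n ih =>
    rw [Nat.count_succ, Nat.count_succ,
      ih (fun x hx => h x (hx.trans (Nat.lt_succ_self n)))]
    by_cases hpn : p n
    · simp [hpn, (h n (Nat.lt_succ_self n)).mp hpn]
    · have hq : ¬ q n := fun hq => hpn ((h n (Nat.lt_succ_self n)).mpr hq)
      simp [hpn, hq]

lemma nth_congr_under {p q : ℕ → Prop} (hp : (setOf p).Infinite) (hq : (setOf q).Infinite)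
    (hsub : ∀ x, q x → p x) {i : ℕ} (hmem : ∀ t ≤ i, q (Nat.nth p t)) :
    Nat.nth q i = Nat.nth p i := by
  classical
  have hqa : q (Nat.nth p i) := hmem i le_rfl
  have hcount : Nat.count q (Nat.nth p i) = i := by
    have h1 : Nat.count q (Nat.nth p i) = Nat.count p (Nat.nth p i) := by
      apply count_congr_lt
      intro x hx
      constructor
      · exact hsub x
      · intro hpx
        have hxlt : Nat.count p x < i :=
          (Nat.nth_lt_nth hp).mp (by rw [Nat.nth_count hpx]; exact hx)
        have hxeq : Nat.nth p (Nat.count p x) = x := Nat.nth_count hpx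
        rw [← hxeq]
        exact hmem _ hxlt.le
    rw [h1, Nat.count_nth_of_infinite hp i]
  have := Nat.nth_count hqa
  rwa [hcount] at this

lemma exists_cyl_nbhd {U : Set (ℕ → Bool)} (hU : IsOpen U) {x : ℕ → Bool} (hx : x ∈ U) :
    ∃ N, ∀ y : ℕ → Bool, (∀ i < N, y i = x i) → y ∈ U := by
  obtain ⟨I, u, hu, hsub⟩ := isOpen_pi_iff.mp hU x hx
  refine ⟨I.sup id + 1, fun y hy => hsub ?_⟩
  refine Set.mem_pi.mpr fun i hi => ?_
  have : y i = x i := hy i (Nat.lt_succ_of_le (Finset.le_sup (f := id) (Finset.mem_coe.mp hi)))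
  rw [this]
  exact (hu i (Finset.mem_coe.mp hi)).2

open Classical in
/-- The "combinatorial test points" for a condition `r` and depth `j`. -/
noncomputable def ptc (r : Set (ℕ × Bool)) (j : ℕ) (s : ℕ → Bool) : ℕ → Bool := fun a =>
  if (a, true) ∈ r then true
  else if a ∈ (sDom r)ᶜ ∧ Nat.count (· ∈ (sDom r)ᶜ) a < j then
    s (Nat.count (· ∈ (sDom r)ᶜ) a)
  else false

open Classical in
lemma finite_indexSet (r : Set (ℕ × Bool)) (j : ℕ) :
    {a | a ∈ (sDom r)ᶜ ∧ Nat.count (· ∈ (sDom r)ᶜ) a < j}.Finite := by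
  have hsub : {a | a ∈ (sDom r)ᶜ ∧ Nat.count (· ∈ (sDom r)ᶜ) a < j}
      ⊆ Nat.nth (· ∈ (sDom r)ᶜ) '' (Set.Iio j) := by
    rintro a ⟨ha, hc⟩
    exact ⟨Nat.count (· ∈ (sDom r)ᶜ) a, hc, Nat.nth_count ha⟩
  exact ((Set.finite_Iio j).image _).subset hsub

lemma ptc_mem_cyl {r : Set (ℕ × Bool)}
    (hfun : ∀ ⦃n : ℕ⦄ ⦃b b' : Bool⦄, (n, b) ∈ r → (n, b') ∈ r → b = b') (j : ℕ) (s : ℕ → Bool) :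
    ptc r j s ∈ cyl r := by
  intro a b hab
  unfold ptc
  by_cases h1 : (a, true) ∈ r
  · rw [if_pos h1]
    exact hfun h1 hab
  · rw [if_neg h1, if_neg]
    · cases b with
      | true => exact absurd hab h1
      | false => rfl
    · rintro ⟨ha, -⟩
      exact ha ⟨b, hab⟩

lemma ptc_mem_Qzero {r p0 : Set (ℕ × Bool)}
    (hfun : ∀ ⦃n : ℕ⦄ ⦃b b' : Bool⦄, (n, b) ∈ r → (n, b') ∈ r → b = b') (hp0 : p0 ⊆ r)
    (hstar : ∀ a ∈ sDom r \ sDom p0, (a, true) ∉ r) (j : ℕ) (s : ℕ → Bool) :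
    ptc r j s ∈ Qzero p0 := by
  constructor
  · intro a b hab
    exact ptc_mem_cyl hfun j s (hp0 hab)
  · apply (finite_indexSet r j).subset
    rintro a ⟨ha, htrue⟩
    unfold ptc at htrue
    by_cases h1 : (a, true) ∈ r
    · exact absurd h1 (hstar a ⟨⟨true, h1⟩, ha⟩)
    · rw [if_neg h1] at htrue
      by_cases h2 : a ∈ (sDom r)ᶜ ∧ Nat.count (· ∈ (sDom r)ᶜ) a < j
      · exact h2
      · rw [if_neg h2] at htrue
        simp at htrue

lemma ptc_congr {r : Set (ℕ × Bool)} {j : ℕ} {s s' : ℕ → Bool} (h : ∀ i < j, s i = s' i) :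
    ptc r j s = ptc r j s' := by
  funext a
  unfold ptc
  split_ifs with h1 h2
  · rfl
  · exact h _ h2.2
  · rfl

lemma finite_ptc_family (r : Set (ℕ × Bool)) (j : ℕ) :
    {x | ∃ s : ℕ → Bool, x = ptc r j s}.Finite := by
  have hsub : {x | ∃ s : ℕ → Bool, x = ptc r j s} ⊆
      (fun v : Fin j → Bool =>
        ptc r j (fun i => if h : i < j then v ⟨i, h⟩ else false)) '' Set.univ := by
    rintro x ⟨s, rfl⟩
    refine ⟨fun i => s i, trivial, ?_⟩
    apply ptc_congr
    intro i hi
    rw [dif_pos hi]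
  exact (Set.finite_univ.image _).subset hsub

open Classical in
lemma shrink {r : Set (ℕ × Bool)}
    (hfun : ∀ ⦃n : ℕ⦄ ⦃b b' : Bool⦄, (n, b) ∈ r → (n, b') ∈ r → b = b')
    (hinf : ((sDom r)ᶜ).Infinite) (j : ℕ)
    {U : Set (ℕ → Bool)} (hU : IsOpen U) (hptU : ∀ s : ℕ → Bool, ptc r j s ∈ U) :
    ∃ r' : Set (ℕ × Bool), IsSilver r' ∧ SLEn j r' r ∧
      (∀ a ∈ sDom r' \ sDom r, (a, true) ∉ r') ∧ cyl r' ⊆ U := by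
  choose N hN using fun v : Fin j → Bool =>
    exists_cyl_nbhd hU (hptU (fun i => if h : i < j then v ⟨i, h⟩ else false))
  set M := max (Finset.univ.sup N) (Nat.nth (· ∈ (sDom r)ᶜ) j) + 1 with hM
  set r' := r ∪ {ab : ℕ × Bool |
      ab.2 = false ∧ ab.1 ∉ sDom r ∧ ab.1 < M ∧ j ≤ Nat.count (· ∈ (sDom r)ᶜ) ab.1} with hr'
  have hsub : r ⊆ r' := Set.subset_union_left
  have hdomsub : sDom r ⊆ sDom r' := fun a ⟨b, hb⟩ => ⟨b, hsub hb⟩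
  have hcomp : ∀ a, a ∈ (sDom r')ᶜ ↔
      a ∉ sDom r ∧ (M ≤ a ∨ Nat.count (· ∈ (sDom r)ᶜ) a < j) := by
    intro a
    constructor
    · intro h
      have h1 : a ∉ sDom r := fun hh => h (hdomsub hh)
      refine ⟨h1, ?_⟩
      by_contra hcon
      push_neg at hcon
      exact h ⟨false, Or.inr ⟨rfl, h1, hcon.1, hcon.2⟩⟩
    · rintro ⟨h1, h2⟩ ⟨b, hb | hb⟩
      · exact h1 ⟨b, hb⟩
      · obtain ⟨-, -, hlt, hge⟩ := hb
        have hlt' : a < M := hlt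
        have hge' : j ≤ Nat.count (· ∈ (sDom r)ᶜ) a := hge
        rcases h2 with h2 | h2 <;> omega
  -- functionality
  have hfun' : ∀ ⦃n : ℕ⦄ ⦃b b' : Bool⦄, (n, b) ∈ r' → (n, b') ∈ r' → b = b' := by
    rintro n b b' (hb | hb) (hb' | hb')
    · exact hfun hb hb'
    · exact absurd ⟨b, hb⟩ hb'.2.1
    · exact absurd ⟨b', hb'⟩ hb.2.1
    · exact hb.1.trans hb'.1.symm
  -- infinite complement
  have hinf' : ((sDom r')ᶜ).Infinite := by
    apply Set.Infinite.mono (s := (sDom r)ᶜ \ Set.Iio M)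
    · rintro a ⟨ha, hM'⟩
      exact (hcomp a).mpr ⟨ha, Or.inl (not_lt.mp hM')⟩
    · exact hinf.diff (Set.finite_Iio M)
  have hnths : ∀ i < j, Nat.nth (· ∈ (sDom r')ᶜ) i = Nat.nth (· ∈ (sDom r)ᶜ) i := by
    intro i hi
    refine nth_congr_under (p := (· ∈ (sDom r)ᶜ)) (q := (· ∈ (sDom r')ᶜ)) hinf hinf' ?_ ?_
    · intro x hx
      exact fun hh => ((hcomp x).mp hx).1 hh
    · intro t ht
      have hmem : Nat.nth (· ∈ (sDom r)ᶜ) t ∈ (sDom r)ᶜ := Nat.nth_mem_of_infinite hinf t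
      have hcnt : Nat.count (· ∈ (sDom r)ᶜ) (Nat.nth (· ∈ (sDom r)ᶜ) t) = t :=
        Nat.count_nth_of_infinite hinf t
      exact (hcomp _).mpr ⟨hmem, Or.inr (by omega)⟩
  refine ⟨r', ⟨hfun', hinf'⟩, ⟨hsub, hnths⟩, ?_, ?_⟩
  · rintro a ⟨hadom, haR⟩ (htrue | htrue)
    · exact haR ⟨true, htrue⟩
    · exact Bool.noConfusion htrue.1
  -- cyl r' ⊆ U
  intro y hy
  set v : Fin j → Bool := fun i => y (Nat.nth (· ∈ (sDom r)ᶜ) i) with hv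
  apply hN v
  intro a haN
  have haM : a < M := by
    have : N v ≤ Finset.univ.sup N := Finset.le_sup (Finset.mem_univ v)
    omega
  show y a = ptc r j (fun i => if h : i < j then v ⟨i, h⟩ else false) a
  unfold ptc
  by_cases hdom : a ∈ sDom r
  · obtain ⟨b, hb⟩ := hdom
    rw [hy (hsub hb)]
    cases b with
    | true => rw [if_pos hb]
    | false =>
      rw [if_neg (fun h1 => Bool.noConfusion (hfun hb h1)), if_neg]
      rintro ⟨ha, -⟩
      exact ha ⟨false, hb⟩
  · by_cases hcnt : Nat.count (· ∈ (sDom r)ᶜ) a < j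
    · rw [if_neg (fun h1 => hdom ⟨true, h1⟩), if_pos ⟨hdom, hcnt⟩]
      have hna : Nat.nth (· ∈ (sDom r)ᶜ) (Nat.count (· ∈ (sDom r)ᶜ) a) = a :=
        Nat.nth_count (by exact hdom)
      show y a = if h : Nat.count (· ∈ (sDom r)ᶜ) a < j then
          v ⟨Nat.count (· ∈ (sDom r)ᶜ) a, h⟩ else false
      rw [dif_pos hcnt]
      show y a = y (Nat.nth (· ∈ (sDom r)ᶜ) (Nat.count (· ∈ (sDom r)ᶜ) a))
      rw [hna]
    · have hnew : (a, false) ∈ r' := Or.inr ⟨rfl, hdom, haM, not_lt.mp hcnt⟩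
      rw [hy hnew, if_neg (fun h1 => hdom ⟨true, h1⟩), if_neg (fun h2 => hcnt h2.2)]

/-- The invariant maintained along the construction. -/
def GoodSeq (p R : ℕ → Set (ℕ × Bool)) : Prop :=
  ∀ n, IsSilver (R n) ∧ p n ⊆ R n ∧ ∀ a ∈ sDom (R n) \ sDom (p n), (a, true) ∉ R n

lemma stage {p : ℕ → Set (ℕ × Bool)} {𝒰 : Set (Set (ℕ → Bool))}
    (h𝒰 : IsOmegaCoverOf (⋃ m, Qzero (p m)) 𝒰) (m : ℕ) (J : ℕ → ℕ)
    (R : ℕ → Set (ℕ × Bool)) (hR : GoodSeq p R) :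
    ∃ U, U ∈ 𝒰 ∧ ∃ R' : ℕ → Set (ℕ × Bool), GoodSeq p R' ∧ (∀ n, R n ⊆ R' n) ∧
      (∀ n ≤ m, SLEn (J n) (R' n) (R n) ∧ cyl (R' n) ⊆ U) ∧ ∀ n, m < n → R' n = R n := by
  classical
  set F : Set (ℕ → Bool) := ⋃ n ∈ Set.Iic m, {x | ∃ s : ℕ → Bool, x = ptc (R n) (J n) s}
    with hF
  have hFfin : F.Finite := (Set.finite_Iic m).biUnion (fun n _ => finite_ptc_family _ _)
  have hFQ : F ⊆ ⋃ m, Qzero (p m) := by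
    rintro x hx
    rw [hF] at hx
    simp only [Set.mem_iUnion, Set.mem_setOf_eq] at hx
    obtain ⟨n, hn, s, rfl⟩ := hx
    exact Set.mem_iUnion.mpr ⟨n, ptc_mem_Qzero (hR n).1.1 (hR n).2.1 (hR n).2.2 _ _⟩
  obtain ⟨U, hU𝒰, hFU⟩ := h𝒰.2.2 F hFQ hFfin
  have hshr : ∀ n, ∃ r', (n ≤ m → (IsSilver r' ∧ SLEn (J n) r' (R n) ∧
      (∀ a ∈ sDom r' \ sDom (R n), (a, true) ∉ r') ∧ cyl r' ⊆ U)) ∧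
      (¬ n ≤ m → r' = R n) ∧ R n ⊆ r' := by
    intro n
    by_cases hn : n ≤ m
    · obtain ⟨r', h1, h2, h3, h4⟩ := shrink (hR n).1.1 (hR n).1.2 (J n) (h𝒰.1 U hU𝒰)
        (fun s => hFU (show ptc (R n) (J n) s ∈ F from
          Set.mem_biUnion hn ⟨s, rfl⟩))
      exact ⟨r', fun _ => ⟨h1, h2, h3, h4⟩, fun h => absurd hn h, h2.1⟩
    · exact ⟨R n, fun h => absurd h hn, fun _ => rfl, subset_rfl⟩
  choose R' h1 h2 h3 using hshr
  refine ⟨U, hU𝒰, R', ?_, h3, fun n hn => ⟨(h1 n hn).2.1, (h1 n hn).2.2.2⟩,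
    fun n hn => h2 n (by omega)⟩
  intro n
  by_cases hn : n ≤ m
  · obtain ⟨hSil, hSLE, hstar, -⟩ := h1 n hn
    refine ⟨hSil, (hR n).2.1.trans hSLE.1, ?_⟩
    rintro a ⟨hadom, hap⟩ htrue
    by_cases haR : a ∈ sDom (R n)
    · obtain ⟨b, hb⟩ := haR
      have hbt : b = true := hSil.1 (hSLE.1 hb) htrue
      exact (hR n).2.2 a ⟨⟨b, hb⟩, hap⟩ (hbt ▸ hb)
    · exact hstar a ⟨hadom, haR⟩ htrue
  · rw [h2 n hn]
    exact hR n

lemma sDom_mono {r r' : Set (ℕ × Bool)} (h : r ⊆ r') : sDom r ⊆ sDom r' :=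
  fun _ ⟨b, hb⟩ => ⟨b, h hb⟩


/-- Given Silver conditions `p_n`, numbers `k_n`, and a sequence `⟨𝒰_n⟩` of ω-covers of
`Q = ⋃ₙ Q⁰(p_n)`, there are `U_m ∈ 𝒰_m` and `q_n ≤_{k_n} p_n` such that `[q_n] ⊆ U_m`
whenever `m ≥ n`. -/
theorem stmt15 (p : ℕ → Set (ℕ × Bool)) (k : ℕ → ℕ) (hp : ∀ n, IsSilver (p n))
    (𝒰 : ℕ → Set (Set (ℕ → Bool)))
    (h𝒰 : ∀ n, IsOmegaCoverOf (⋃ m, Qzero (p m)) (𝒰 n)) :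
    ∃ U : ℕ → Set (ℕ → Bool), (∀ m, U m ∈ 𝒰 m) ∧
      ∃ q : ℕ → Set (ℕ × Bool), (∀ n, IsSilver (q n) ∧ SLEn (k n) (q n) (p n)) ∧
        ∀ n m, n ≤ m → cyl (q n) ⊆ U m := by
  classical
  have key : ∀ m (R : ℕ → Set (ℕ × Bool)), GoodSeq p R →
      ∃ U, U ∈ 𝒰 m ∧ ∃ R', GoodSeq p R' ∧ (∀ n, R n ⊆ R' n) ∧
        (∀ n ≤ m, SLEn (k n + (m - n) + 1) (R' n) (R n) ∧ cyl (R' n) ⊆ U) ∧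
        ∀ n, m < n → R' n = R n :=
    fun m R hR => stage (h𝒰 m) m (fun n => k n + (m - n) + 1) R hR
  choose! Uf hUf Rf hGood hsub hstage heq using key
  set Rs : ℕ → ℕ → Set (ℕ × Bool) := fun m => Nat.rec p (fun m R => Rf m R) m with hRs
  have hRsS : ∀ m, Rs (m + 1) = Rf m (Rs m) := fun m => rfl
  have hGoodRs : ∀ m, GoodSeq p (Rs m) := by
    intro m
    induction m with
    | zero => exact fun n => ⟨hp n, subset_rfl, fun a ha => absurd ha.1 ha.2⟩
    | succ m ih => rw [hRsS]; exact hGood m (Rs m) ih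
  have hmono : ∀ m n, Rs m n ⊆ Rs (m + 1) n := fun m n => by
    rw [hRsS]; exact hsub m (Rs m) (hGoodRs m) n
  have hchain : ∀ m m', m ≤ m' → ∀ n, Rs m n ⊆ Rs m' n := by
    intro m m' h
    induction m', h using Nat.le_induction with
    | base => exact fun n => subset_rfl
    | succ m' hm ih => exact fun n => (ih n).trans (hmono m' n)
  have hstageRs : ∀ m n, n ≤ m →
      SLEn (k n + (m - n) + 1) (Rs (m + 1) n) (Rs m n) ∧ cyl (Rs (m + 1) n) ⊆ Uf m (Rs m) := by
    intro m n hn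
    rw [hRsS]
    exact hstage m (Rs m) (hGoodRs m) n hn
  have heqRs : ∀ m n, m < n → Rs (m + 1) n = Rs m n := fun m n h => by
    rw [hRsS]; exact heq m (Rs m) (hGoodRs m) n h
  -- facts about the fusion q n = ⋃ m, Rs m n
  have hcinf : ∀ m n, ((sDom (Rs m n))ᶜ).Infinite := fun m n => (hGoodRs m n).1.2
  have hsDomU : ∀ n, sDom (⋃ m, Rs m n) = ⋃ m, sDom (Rs m n) := by
    intro n
    ext a
    simp only [sDom, Set.mem_iUnion, Set.mem_setOf_eq]
    exact ⟨fun ⟨b, m, h⟩ => ⟨m, b, h⟩, fun ⟨m, b, h⟩ => ⟨b, m, h⟩⟩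
  have hcompU : ∀ n a, a ∈ (sDom (⋃ m, Rs m n))ᶜ ↔ ∀ m, a ∈ (sDom (Rs m n))ᶜ := by
    intro n a
    rw [Set.mem_compl_iff, hsDomU]
    simp only [Set.mem_iUnion, not_exists]
    exact ⟨fun h m => h m, fun h m => h m⟩
  -- stability of early nth values
  have hstab0 : ∀ n t, t < k n → ∀ m,
      Nat.nth (· ∈ (sDom (Rs m n))ᶜ) t = Nat.nth (· ∈ (sDom (p n))ᶜ) t := by
    intro n t ht m
    induction m with
    | zero => rfl
    | succ m ih =>
      by_cases hm : n ≤ m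
      · rw [(hstageRs m n hm).1.2 t (by omega), ih]
      · rw [heqRs m n (by omega), ih]
  have hstab : ∀ n i m, n + i ≤ m →
      Nat.nth (· ∈ (sDom (Rs m n))ᶜ) (k n + i)
        = Nat.nth (· ∈ (sDom (Rs (n + i) n))ᶜ) (k n + i) := by
    intro n i m hm
    induction m, hm using Nat.le_induction with
    | base => rfl
    | succ m hm ih =>
      rw [(hstageRs m n (by omega)).1.2 (k n + i) (by omega), ih]
  have hqinf : ∀ n, ((sDom (⋃ m, Rs m n))ᶜ).Infinite := by
    intro n
    set E : ℕ → ℕ := fun i => Nat.nth (· ∈ (sDom (Rs (n + i) n))ᶜ) (k n + i) with hE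
    have hEmem : ∀ i, E i ∈ (sDom (⋃ m, Rs m n))ᶜ := by
      intro i
      rw [hcompU]
      intro m
      rcases le_or_gt (n + i) m with hm | hm
      · show Nat.nth (· ∈ (sDom (Rs (n + i) n))ᶜ) (k n + i) ∈ (sDom (Rs m n))ᶜ
        have h0 : Nat.nth (· ∈ (sDom (Rs m n))ᶜ) (k n + i) ∈ (sDom (Rs m n))ᶜ :=
          Nat.nth_mem_of_infinite (p := (· ∈ (sDom (Rs m n))ᶜ)) (hcinf m n) (k n + i)
        rwa [hstab n i m hm] at h0
      · have h1 : E i ∈ (sDom (Rs (n + i) n))ᶜ :=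
          Nat.nth_mem_of_infinite (p := (· ∈ (sDom (Rs (n + i) n))ᶜ)) (hcinf (n + i) n) (k n + i)
        exact fun hc => h1 (sDom_mono (hchain m (n + i) hm.le n) hc)
    have hEinj : Function.Injective E := by
      have hsm : StrictMono E := by
        intro i i' hii
        have e1 : E i = Nat.nth (· ∈ (sDom (Rs (n + i') n))ᶜ) (k n + i) :=
          (hstab n i (n + i') (by omega)).symm
        have e2 : E i' = Nat.nth (· ∈ (sDom (Rs (n + i') n))ᶜ) (k n + i') := rfl
        rw [e1, e2]
        exact (Nat.nth_lt_nth (hcinf (n + i') n)).mpr (by omega)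
      exact hsm.injective
    exact Set.infinite_of_injective_forall_mem (f := E) hEinj hEmem
  refine ⟨fun m => Uf m (Rs m), fun m => hUf m (Rs m) (hGoodRs m),
    fun n => ⋃ m, Rs m n, fun n => ?_, fun n m hnm => ?_⟩
  · constructor
    · constructor
      · rintro a b b' hb hb'
        obtain ⟨mb, hmb⟩ := Set.mem_iUnion.mp hb
        obtain ⟨mb', hmb'⟩ := Set.mem_iUnion.mp hb'
        rcases le_total mb mb' with h | h
        · exact (hGoodRs mb' n).1.1 (hchain mb mb' h n hmb) hmb'
        · exact (hGoodRs mb n).1.1 hmb (hchain mb' mb h n hmb')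
      · exact hqinf n
    · constructor
      · intro x hx
        exact Set.mem_iUnion.mpr ⟨0, hx⟩
      · intro i hi
        refine nth_congr_under (p := (· ∈ (sDom (p n))ᶜ))
          (q := (· ∈ (sDom (⋃ m, Rs m n))ᶜ)) (hp n).2 (hqinf n) ?_ ?_
        · intro x hx
          exact fun hc => ((hcompU n x).mp hx 0) hc
        · intro t ht
          rw [hcompU]
          intro m
          have h0 : Nat.nth (· ∈ (sDom (Rs m n))ᶜ) t ∈ (sDom (Rs m n))ᶜ :=
            Nat.nth_mem_of_infinite (p := (· ∈ (sDom (Rs m n))ᶜ)) (hcinf m n) t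
          rwa [hstab0 n t (by omega) m] at h0
  · intro x hx
    apply (hstageRs m n hnm).2
    intro a b hab
    exact hx (Set.mem_iUnion.mpr ⟨m + 1, hab⟩)
end

section
/- Let ⟨(p_n, k_n)⟩_{n∈ℕ} be a sequence of pairs consisting of a Silver condition and a natural number. Then there is a sequence ⟨q_n⟩_{n∈ℕ} of Silver conditions with q_n ≤_{k_n} p_n for all n, such that for all n ≠ m, the conditions q_n and q_m are strongly disjoint, i.e., there are infinitely many k ∈ dom(q_n) ∩ dom(q_m) with q_n(k) ≠ q_m(k). -/
open Set

/-!
Enumerate the pairs `(n, m)` with `n ≠ m` so that each occurs at infinitely many stages `s`.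
At stage `s` pick a fresh point `J s` outside `dom(p_m)` and beyond the `k_n`-th and `k_m`-th
points of the complements of `dom(p_n)` and `dom(p_m)`; give it in `q_n` the value that `p_n`
has there (or `0`) and in `q_m` the opposite value. The thresholds keep the first `k_r` points
outside `dom(p_r)` free, and a second fresh point `y s ∉ dom(p_n)`, reserved at each stage and
never used as a `J`, keeps the complement of `dom(q_n)` infinite.
-/

open Function

theorem Nat.nth_eq_nth_of_forall_lt_nth {P Q : ℕ → Prop} {k : ℕ} (hP : (Set.ofPred P).Infinite)
    (hQP : ∀ x, Q x → P x) (hPQ : ∀ x < Nat.nth P k, P x → Q x) :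
    ∀ i < k, Nat.nth Q i = Nat.nth P i := by
  classical
  intro i hi
  have hlt : Nat.nth P i < Nat.nth P k := (Nat.nth_lt_nth hP).2 hi
  have hcount : Nat.count Q (Nat.nth P i) = Nat.count P (Nat.nth P i) :=
    le_antisymm (Nat.count_mono_left fun x _ => hQP x)
      (Nat.count_mono_left fun x hx => hPQ x (hx.trans hlt))
  rw [← Nat.nth_count (hPQ _ hlt (Nat.nth_mem_of_infinite hP i)), hcount,
    Nat.count_nth_of_infinite hP]

theorem exists_strictMono_forall_mem {S : ℕ → Set ℕ} (hS : ∀ t, (S t).Infinite) :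
    ∃ x : ℕ → ℕ, StrictMono x ∧ ∀ t, x t ∈ S t := by
  choose f hfS hlt using fun t a => (hS t).exists_gt a
  let x : ℕ → ℕ := fun t => Nat.rec (f 0 0) (fun t xt => f (t + 1) xt) t
  refine ⟨x, strictMono_nat_of_lt_succ fun t => hlt _ _, fun t => ?_⟩
  cases t <;> apply hfS

theorem exists_injective_forall_mem {ι : Type*} [Countable ι] {S : ι → Set ℕ}
    (hS : ∀ i, (S i).Infinite) : ∃ x : ι → ℕ, Injective x ∧ ∀ i, x i ∈ S i := by
  obtain ⟨e, he⟩ := Countable.exists_injective_nat ι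
  have hS' : ∀ n, {a | ∀ i, e i = n → a ∈ S i}.Infinite := by
    intro n
    by_cases hn : ∃ i, e i = n
    · obtain ⟨i, rfl⟩ := hn
      convert hS i using 1
      ext a
      exact ⟨fun h => h i rfl, fun h j hj => he hj ▸ h⟩
    · push Not at hn
      simpa [hn] using Set.infinite_univ
  obtain ⟨x, hx, hxS⟩ := exists_strictMono_forall_mem hS'
  exact ⟨x ∘ e, hx.injective.comp he, fun i => hxS (e i) i rfl⟩

theorem Set.Countable.exists_seq_infinite_fibers {α : Type*} {T : Set α} (hT : T.Countable)
    (hne : T.Nonempty) : ∃ σ : ℕ → α, (∀ s, σ s ∈ T) ∧ ∀ a ∈ T, {s | σ s = a}.Infinite := by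
  obtain ⟨f, rfl⟩ := hT.exists_eq_range hne
  refine ⟨fun s => f s.unpair.1, fun s => mem_range_self _, ?_⟩
  rintro _ ⟨i, rfl⟩
  refine Set.infinite_of_injective_forall_mem (f := Nat.pair i) ?_ fun t => ?_
  · intro t t' h
    simpa using congrArg (fun s => s.unpair.2) h
  · simp

section Extension

variable (p : ℕ → Set (ℕ × Bool)) (σ : ℕ → ℕ × ℕ) (J : ℕ → ℕ)

open Classical in
/-- The value of `p (σ s).1` at `J s`, or `false` where it is undefined. -/
noncomputable def stageValue (s : ℕ) : Bool := decide ((J s, true) ∈ p (σ s).1)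

def newPoints (r : ℕ) : Set (ℕ × Bool) :=
  {z | ∃ s, ((σ s).1 = r ∧ z = (J s, stageValue p σ J s)) ∨
    ((σ s).2 = r ∧ z = (J s, !stageValue p σ J s))}

variable {p σ J}

theorem mem_sDom_union_newPoints {r x : ℕ} (hx : x ∈ sDom (p r ∪ newPoints p σ J r)) :
    x ∈ sDom (p r) ∨ ∃ s, ((σ s).1 = r ∨ (σ s).2 = r) ∧ J s = x := by
  obtain ⟨b, hb | ⟨s, ⟨hs, hsx⟩ | ⟨hs, hsx⟩⟩⟩ := hx
  · exact .inl ⟨b, hb⟩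
  · exact .inr ⟨s, .inl hs, (congrArg Prod.fst hsx).symm⟩
  · exact .inr ⟨s, .inr hs, (congrArg Prod.fst hsx).symm⟩

theorem newPoints_functional (hσ : ∀ s, (σ s).1 ≠ (σ s).2) (hJ : Injective J) (r : ℕ)
    ⦃x : ℕ⦄ ⦃b b' : Bool⦄ (hb : (x, b) ∈ newPoints p σ J r)
    (hb' : (x, b') ∈ newPoints p σ J r) : b = b' := by
  obtain ⟨s, hs⟩ := hb
  obtain ⟨s', hs'⟩ := hb'
  obtain rfl : s = s' := hJ <| by
    rcases hs with ⟨-, h⟩ | ⟨-, h⟩ <;> rcases hs' with ⟨-, h'⟩ | ⟨-, h'⟩ <;> simp_all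
  have := hσ s
  rcases hs with ⟨h, hb⟩ | ⟨h, hb⟩ <;> rcases hs' with ⟨h', hb'⟩ | ⟨h', hb'⟩ <;> simp_all

theorem mem_of_mem_newPoints_of_mem_sDom {r : ℕ}
    (hpf : ∀ ⦃n : ℕ⦄ ⦃b b' : Bool⦄, (n, b) ∈ p r → (n, b') ∈ p r → b = b')
    (hJp : ∀ s, J s ∉ sDom (p (σ s).2)) {z : ℕ × Bool}
    (hz : z ∈ newPoints p σ J r) (hzp : z.1 ∈ sDom (p r)) : z ∈ p r := by
  obtain ⟨s, ⟨rfl, rfl⟩ | ⟨rfl, rfl⟩⟩ := hz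
  · obtain ⟨c, hc⟩ := hzp
    cases c
    · have : (J s, true) ∉ p (σ s).1 := fun h => Bool.false_ne_true (hpf hc h)
      simpa [stageValue, this] using hc
    · simp [stageValue, hc]
  · exact absurd hzp (hJp s)

theorem union_newPoints_functional {r : ℕ}
    (hpf : ∀ ⦃n : ℕ⦄ ⦃b b' : Bool⦄, (n, b) ∈ p r → (n, b') ∈ p r → b = b')
    (hσ : ∀ s, (σ s).1 ≠ (σ s).2) (hJ : Injective J) (hJp : ∀ s, J s ∉ sDom (p (σ s).2))
    ⦃x : ℕ⦄ ⦃b b' : Bool⦄ (hb : (x, b) ∈ p r ∪ newPoints p σ J r)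
    (hb' : (x, b') ∈ p r ∪ newPoints p σ J r) : b = b' := by
  by_cases hx : x ∈ sDom (p r)
  · replace hb := hb.elim id fun h => mem_of_mem_newPoints_of_mem_sDom hpf hJp h hx
    replace hb' := hb'.elim id fun h => mem_of_mem_newPoints_of_mem_sDom hpf hJp h hx
    exact hpf hb hb'
  · have hb : (x, b) ∈ newPoints p σ J r := hb.resolve_left fun h => hx ⟨b, h⟩
    have hb' : (x, b') ∈ newPoints p σ J r := hb'.resolve_left fun h => hx ⟨b', h⟩
    exact newPoints_functional hσ hJ r hb hb'

theorem infinite_compl_sDom_union_newPoints {y : ℕ → ℕ} (hy : Injective y)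
    (hyJ : ∀ s t, y s ≠ J t) (hyp : ∀ s, y s ∉ sDom (p (σ s).1)) {r : ℕ}
    (hr : {s | (σ s).1 = r}.Infinite) : (sDom (p r ∪ newPoints p σ J r))ᶜ.Infinite := by
  refine (hr.image hy.injOn).mono ?_
  rintro _ ⟨s, rfl, rfl⟩ hys
  rcases mem_sDom_union_newPoints hys with h | ⟨t, -, ht⟩
  exacts [hyp s h, hyJ s t ht.symm]

theorem nth_compl_sDom_union_newPoints {r : ℕ} {k : ℕ} (hp : (sDom (p r))ᶜ.Infinite)
    (hJ : ∀ s, (σ s).1 = r ∨ (σ s).2 = r → Nat.nth (· ∈ (sDom (p r))ᶜ) k < J s) :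
    ∀ i < k, Nat.nth (· ∈ (sDom (p r ∪ newPoints p σ J r))ᶜ) i =
      Nat.nth (· ∈ (sDom (p r))ᶜ) i := by
  refine Nat.nth_eq_nth_of_forall_lt_nth hp (fun x hx hxp => hx ?_) fun x hx hxp hxq => ?_
  · obtain ⟨b, hb⟩ := hxp
    exact ⟨b, .inl hb⟩
  · rcases mem_sDom_union_newPoints hxq with h | ⟨s, hs, rfl⟩
    exacts [hxp h, (hJ s hs).not_gt hx]

theorem infinite_disagreement (hJ : Injective J) {n m : ℕ}
    (hnm : {s | σ s = (n, m)}.Infinite) :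
    {j | ∃ b, (j, b) ∈ p n ∪ newPoints p σ J n ∧ (j, !b) ∈ p m ∪ newPoints p σ J m}.Infinite := by
  refine (hnm.image hJ.injOn).mono ?_
  rintro _ ⟨s, hs, rfl⟩
  exact ⟨stageValue p σ J s, .inr ⟨s, .inl ⟨by rw [hs], rfl⟩⟩, .inr ⟨s, .inr ⟨by rw [hs], rfl⟩⟩⟩

end Extension

theorem exists_stagePoints {p : ℕ → Set (ℕ × Bool)} (hp : ∀ n, ((sDom (p n))ᶜ).Infinite)
    (σ : ℕ → ℕ × ℕ) (b : ℕ → ℕ) :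
    ∃ J y : ℕ → ℕ, Injective J ∧ Injective y ∧ (∀ s t, y s ≠ J t) ∧
      ∀ s, J s ∉ sDom (p (σ s).2) ∧ b (σ s).1 < J s ∧ b (σ s).2 < J s ∧
        y s ∉ sDom (p (σ s).1) := by
  obtain ⟨x, hx, hxS⟩ := exists_injective_forall_mem (S := Sum.elim (fun s => (sDom (p (σ s).1))ᶜ)
    fun s => (sDom (p (σ s).2))ᶜ \ Iic (max (b (σ s).1) (b (σ s).2)))
    (Sum.forall.2 ⟨fun s => hp _, fun s => (hp _).sdiff (finite_Iic _)⟩)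
  refine ⟨x ∘ .inr, x ∘ .inl, hx.comp Sum.inr_injective, hx.comp Sum.inl_injective,
    fun s t h => Sum.inl_ne_inr (hx h), fun s => ?_⟩
  obtain ⟨hJp, hJb⟩ := hxS (.inr s)
  obtain ⟨hJb₁, hJb₂⟩ := max_lt_iff.1 (not_le.1 (mt mem_Iic.2 hJb))
  exact ⟨hJp, hJb₁, hJb₂, hxS (.inl s)⟩

/-- Given Silver conditions `p_n` and numbers `k_n`, there are `q_n ≤_{k_n} p_n` that are
pairwise strongly disjoint: for `n ≠ m` there are infinitely many `k ∈ dom(q_n) ∩ dom(q_m)`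
with `q_n(k) ≠ q_m(k)`. -/
theorem stmt17 (p : ℕ → Set (ℕ × Bool)) (k : ℕ → ℕ) (hp : ∀ n, IsSilver (p n)) :
    ∃ q : ℕ → Set (ℕ × Bool), (∀ n, IsSilver (q n) ∧ SLEn (k n) (q n) (p n)) ∧
      ∀ n m, n ≠ m → {j | ∃ b, (j, b) ∈ q n ∧ (j, !b) ∈ q m}.Infinite := by
  obtain ⟨σ, hσ, hfib⟩ := (Set.to_countable {e : ℕ × ℕ | e.1 ≠ e.2}).exists_seq_infinite_fibers
    ⟨(0, 1), zero_ne_one⟩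
  obtain ⟨J, y, hJ, hy, hyJ, hJy⟩ :=
    exists_stagePoints (fun n => (hp n).2) σ fun r => Nat.nth (· ∈ (sDom (p r))ᶜ) (k r)
  refine ⟨fun r => p r ∪ newPoints p σ J r, fun r => ⟨⟨?_, ?_⟩, subset_union_left, ?_⟩,
    fun n m hnm => infinite_disagreement hJ (hfib (n, m) hnm)⟩
  · exact union_newPoints_functional (hp r).1 hσ hJ (fun s => (hJy s).1)
  · refine infinite_compl_sDom_union_newPoints hy hyJ (fun s => (hJy s).2.2.2) <|
      (hfib (r, r + 1) r.ne_add_one).mono fun s (hs : σ s = _) => by simp [hs]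
  · refine nth_compl_sDom_union_newPoints (hp r).2 ?_
    rintro s (rfl | rfl)
    exacts [(hJy s).2.1, (hJy s).2.2.1]
end

section
/- Let T = {x_α : α < 𝔟} ⊆ [ℕ]^∞ be an unbounded tower, and let Y be a topological space such that for every α < 𝔟 the product {x_ξ : ξ < α} × Y satisfies S₁(B_Γ,B_Γ). Suppose that for every sequence ⟨𝒱_k⟩_{k∈ℕ} of countable γ-covers of (T ∪ Fin) × Y, with 𝒱_k = {V^k_n : n ∈ ℕ}, there exists a sequence ⟨n_k⟩_{k∈ℕ} of natural numbers such that {V^k_{n_k} : k ∈ ℕ} is a γ-cover of A × Y for some set A with Fin ⊆ A ⊆ T ∪ Fin and |T ∖ A| < 𝔟. Then (T ∪ Fin) × Y satisfies S₁(Γ,Γ). -/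
open Filter Set

universe u

/-- `f ≤* g`: eventual domination. -/
def EvLE (f g : ℕ → ℕ) : Prop := ∀ᶠ n in Filter.atTop, f n ≤ g n

/-- The bounding number `𝔟`. -/
noncomputable def bCardinal : Cardinal.{0} :=
  sInf {c : Cardinal.{0} | ∃ F : Set (ℕ → ℕ),
    Cardinal.mk ↥F = c ∧ ¬ ∃ g : ℕ → ℕ, ∀ f ∈ F, EvLE f g}

/-- `Fin`: the family of (characteristic functions of) finite subsets of `ℕ`. -/
def finSupp : Set (ℕ → Bool) := {x | {n | x n = true}.Finite}

/-- A γ-cover of a subset `S` of a topological space `Z`: an infinite family of open subsets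
of `Z`, none containing `S`, such that every point of `S` belongs to all but finitely many
members. -/
def IsGammaCoverOf {Z : Type u} [TopologicalSpace Z] (S : Set Z) (𝒰 : Set (Set Z)) : Prop :=
  𝒰.Infinite ∧ (∀ U ∈ 𝒰, IsOpen U) ∧ (∀ U ∈ 𝒰, ¬ S ⊆ U) ∧
    ∀ z ∈ S, {U ∈ 𝒰 | z ∉ U}.Finite

/-- `S₁(Γ,Γ)`: from every sequence of γ-covers one can select single members forming a
γ-cover. -/
def SOneGammaGamma (Z : Type u) [TopologicalSpace Z] : Prop :=
  ∀ 𝒰 : ℕ → Set (Set Z), (∀ n, IsGammaCoverOf (Set.univ : Set Z) (𝒰 n)) →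
    ∃ U : ℕ → Set Z, (∀ n, U n ∈ 𝒰 n) ∧ IsGammaCoverOf (Set.univ : Set Z) (Set.range U)

/-- `S₁(B_Γ,B_Γ)`: from every sequence of countable Borel γ-covers one can select single
members `B n` such that every point belongs to all but finitely many of them. -/
def SOneBGammaBGamma (Y : Type u) [TopologicalSpace Y] : Prop :=
  ∀ ℬ : ℕ → Set (Set Y),
    (∀ n, (ℬ n).Countable ∧ (ℬ n).Infinite ∧ (∀ B ∈ ℬ n, @MeasurableSet Y (borel Y) B) ∧
      (∀ B ∈ ℬ n, ¬ (Set.univ : Set Y) ⊆ B) ∧ ∀ y : Y, {B ∈ ℬ n | y ∉ B}.Finite) →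
    ∃ B : ℕ → Set Y, (∀ n, B n ∈ ℬ n) ∧ ∀ y : Y, ∀ᶠ n in atTop, y ∈ B n


/-!
Enumerate each γ-cover `𝒰 k` injectively as `u k` and apply the hypothesis to all tails
`u k (· + i)` at once. The selection it returns works on `A × Y`, and since it picks a member
from the `i`-th tail for every `i`, it contains members of `𝒰 k` of arbitrarily large
index. Because `T` is an unbounded tower of length `𝔟` and `|T ∖ A| < 𝔟`, the set `T ∖ A`
lies in an initial segment `{x_ξ : ξ < α}`: otherwise a bound of its `< 𝔟` enumerations would
bound the whole tower. On `{x_ξ : ξ < α} × Y`, `S₁(B_Γ,B_Γ)` applied to the Borel sets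
`⋂_{j ≥ m} u k j` yields thresholds `g k` beyond which `u k j` eventually covers every point.
Choosing, injectively, for each `k` a selected member of `𝒰 k` with index at least `g k`
gives a γ-cover of both `A × Y` and `(T ∖ A) × Y`.
-/

open Function MeasureTheory

theorem Nat.exists_nth_le_nth_add {p q : ℕ → Prop} (hq : {n | q n}.Infinite)
    (hd : {n | q n ∧ ¬ p n}.Finite) : ∃ c, ∀ n, nth p n ≤ nth q (n + c) := by
  classical
  refine ⟨hd.toFinset.card, fun n => ?_⟩
  set N := nth q (n + hd.toFinset.card)
  have hcount_q : count q (N + 1) = n + hd.toFinset.card + 1 := count_nth_succ_of_infinite hq _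
  have hcount_le : count q (N + 1) ≤ count p (N + 1) + hd.toFinset.card := by
    simp only [count_eq_card_filter_range]
    calc _ ≤ ((Finset.range (N + 1)).filter p ∪ hd.toFinset).card := by
          refine Finset.card_le_card fun m hm => ?_
          by_cases hpm : p m <;> simp_all
      _ ≤ _ := Finset.card_union_le _ _
  have := nth_lt_of_lt_count (show n < count p (N + 1) by omega)
  omega

theorem EvLE.comp_add_le_sup_range {f g : ℕ → ℕ} (h : EvLE f g) (c : ℕ) :
    EvLE (fun n => f (n + c)) (fun n => (Finset.range (2 * n + 1)).sup g) := by
  obtain ⟨N, hN⟩ := eventually_atTop.1 h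
  filter_upwards [eventually_ge_atTop N, eventually_ge_atTop c] with n hnN hnc
  exact (hN _ (by omega)).trans (Finset.le_sup (Finset.mem_range.2 (by omega)))

theorem exists_evLE_of_mk_lt_bCardinal {F : Set (ℕ → ℕ)} (h : Cardinal.mk F < bCardinal) :
    ∃ g, ∀ f ∈ F, EvLE f g := by
  by_contra hF
  exact (csInf_le' ⟨F, rfl, hF⟩ : bCardinal ≤ _).not_gt h

section Tower

variable {κ : Ordinal.{0}} {x : Ordinal.{0} → ℕ → Bool}

theorem exists_nth_le_nth_add_of_le (hinf : ∀ α < κ, {n | x α n = true}.Infinite)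
    (htower : ∀ α β : Ordinal.{0}, α < β → β < κ → {n | x β n = true ∧ x α n = false}.Finite)
    {β ξ : Ordinal.{0}} (hβξ : β ≤ ξ) (hξ : ξ < κ) :
    ∃ c, ∀ n, Nat.nth (fun k => x β k = true) n ≤ Nat.nth (fun k => x ξ k = true) (n + c) := by
  rcases hβξ.eq_or_lt with rfl | hlt
  · exact ⟨0, fun n => le_rfl⟩
  · exact Nat.exists_nth_le_nth_add (hinf ξ hξ)
      ((htower β ξ hlt hξ).subset fun n hn => ⟨hn.1, by simpa using hn.2⟩)

theorem exists_lt_subset_image_Iio_of_mk_lt_bCardinal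
    (hinf : ∀ α < κ, {n | x α n = true}.Infinite)
    (htower : ∀ α β : Ordinal.{0}, α < β → β < κ → {n | x β n = true ∧ x α n = false}.Finite)
    (hunb : ¬ ∃ g : ℕ → ℕ, ∀ α < κ, ∀ᶠ n in atTop, Nat.nth (fun k => x α k = true) n ≤ g n)
    {S : Set (ℕ → Bool)} (hS : S ⊆ x '' Iio κ) (hcard : Cardinal.mk S < bCardinal) :
    ∃ α < κ, S ⊆ x '' Iio α := by
  by_contra! hS_cofinal
  obtain ⟨g, hg⟩ := exists_evLE_of_mk_lt_bCardinal
    ((Cardinal.mk_image_le (f := fun t => Nat.nth (fun k => t k = true))).trans_lt hcard)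
  refine hunb ⟨fun n => (Finset.range (2 * n + 1)).sup g, fun β hβ => ?_⟩
  obtain ⟨t, htS, htβ⟩ := not_subset.1 (hS_cofinal β hβ)
  obtain ⟨ξ, hξ, rfl⟩ := hS htS
  obtain ⟨c, hc⟩ := exists_nth_le_nth_add_of_le hinf htower
    (not_lt.1 fun h => htβ ⟨ξ, h, rfl⟩) hξ
  filter_upwards [(hg _ ⟨_, htS, rfl⟩).comp_add_le_sup_range c] with n hn
  exact (hc n).trans hn

end Tower

theorem exists_injective_forall_mem_s18 {α : Type*} {s : ℕ → Set α} (hs : ∀ k, (s k).Infinite) :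
    ∃ f : ℕ → α, Injective f ∧ ∀ k, f k ∈ s k := by
  classical
  choose next hnext_mem hnext_notMem using fun k (t : Finset α) => (hs k).exists_notMem_finset t
  let chosen : ℕ → Finset α := fun k => Nat.rec ∅ (fun k t => insert (next k t) t) k
  have hchosen : ∀ b, ∀ a < b, next a (chosen a) ∈ chosen b := by
    intro b
    induction b with
    | zero => simp
    | succ b ih =>
      intro a hab
      rcases Nat.lt_succ_iff_lt_or_eq.1 hab with h | rfl
      · exact Finset.mem_insert_of_mem (ih a h)
      · exact Finset.mem_insert_self _ _
  exact ⟨fun k => next k (chosen k), Injective.of_lt_imp_ne fun a b hab heq =>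
    hnext_notMem b (chosen b) (heq ▸ hchosen b a hab), fun k => hnext_mem _ _⟩

section GammaCover

variable {Z : Type u} [TopologicalSpace Z] {S : Set Z}

theorem IsGammaCoverOf.exists_injective {𝒰 : Set (Set Z)} (h : IsGammaCoverOf S 𝒰) :
    ∃ u : ℕ → Set Z, Injective u ∧ ∀ m, u m ∈ 𝒰 :=
  ⟨fun m => h.1.natEmbedding _ m, Subtype.val_injective.comp (h.1.natEmbedding _).injective,
    fun m => (h.1.natEmbedding _ m).2⟩

theorem IsGammaCoverOf.eventually_mem {𝒰 : Set (Set Z)} (h : IsGammaCoverOf S 𝒰)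
    {u : ℕ → Set Z} (hu : Injective u) (hu𝒰 : ∀ m, u m ∈ 𝒰) {z : Z} (hz : z ∈ S) :
    ∀ᶠ m in atTop, z ∈ u m := by
  rw [← Nat.cofinite_eq_atTop, eventually_cofinite]
  exact ((h.2.2.2 z hz).preimage hu.injOn).subset fun m hm => ⟨hu𝒰 m, hm⟩

theorem isGammaCoverOf_range {u : ℕ → Set Z} (hu : Injective u) (hopen : ∀ m, IsOpen (u m))
    (hS : ∀ m, ¬ S ⊆ u m) (hev : ∀ z ∈ S, ∀ᶠ m in atTop, z ∈ u m) :
    IsGammaCoverOf S (range u) := by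
  refine ⟨infinite_range_of_injective hu, forall_mem_range.2 hopen, forall_mem_range.2 hS,
    fun z hz => ?_⟩
  have hbad : {m | z ∉ u m}.Finite := by
    simpa only [← Nat.cofinite_eq_atTop, eventually_cofinite] using hev z hz
  refine (hbad.image u).subset ?_
  rintro _ ⟨⟨m, rfl⟩, hzW⟩
  exact ⟨m, hzW, rfl⟩

/-- All tails `u k (· + i)` of all the sequences `u k`, indexed through `Nat.pair k i`. -/
def tails {α : Type*} (u : ℕ → ℕ → α) (j m : ℕ) : α := u (Nat.unpair j).1 (m + (Nat.unpair j).2)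

theorem tails_pair {α : Type*} (u : ℕ → ℕ → α) (k i m : ℕ) :
    tails u (Nat.pair k i) m = u k (m + i) := by
  simp only [tails, Nat.unpair_pair]

theorem isGammaCoverOf_tails {u : ℕ → ℕ → Set Z} (hu : ∀ k, Injective (u k))
    (hopen : ∀ k m, IsOpen (u k m)) (hS : ∀ k m, ¬ S ⊆ u k m)
    (hev : ∀ z ∈ S, ∀ k, ∀ᶠ m in atTop, z ∈ u k m) (j : ℕ) :
    IsGammaCoverOf S (range (tails u j)) :=
  isGammaCoverOf_range ((hu _).comp (add_left_injective _)) (fun _ => hopen _ _) (fun _ => hS _ _)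
    fun z hz => (tendsto_add_atTop_nat _).eventually (hev z hz _)

theorem exists_isGammaCoverOf_of_tails {u : ℕ → ℕ → Set Z} (hu : ∀ k, Injective (u k))
    (hopen : ∀ k m, IsOpen (u k m)) (hS : ∀ k m, ¬ S ⊆ u k m) {n g : ℕ → ℕ} {S₁ S₂ : Set Z}
    (hS₁ : IsGammaCoverOf S₁ (range fun j => tails u j (n j)))
    (hS₂ : ∀ z ∈ S₂, ∀ᶠ k in atTop, ∀ j ≥ g k, z ∈ u k j) (hS₁₂ : S ⊆ S₁ ∪ S₂) :
    ∃ U : ℕ → Set Z, (∀ k, U k ∈ range (u k)) ∧ IsGammaCoverOf S (range U) := by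
  have hinf : ∀ k, {W | ∃ i ≥ g k, W = u k (n (Nat.pair k i) + i)}.Infinite := by
    intro k
    have hidx : ((fun i => n (Nat.pair k i) + i) '' Ici (g k)).Infinite :=
      infinite_of_forall_exists_gt fun a =>
        ⟨_, mem_image_of_mem _ (le_max_right (a + 1) (g k)), by omega⟩
    refine (hidx.image (hu k).injOn).mono ?_
    rintro _ ⟨_, ⟨i, hi, rfl⟩, rfl⟩
    exact ⟨i, hi, rfl⟩
  obtain ⟨U, hU, hU_mem⟩ := exists_injective_forall_mem_s18 hinf
  choose i hi hUi using hU_mem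
  refine ⟨U, fun k => ⟨_, (hUi k).symm⟩, isGammaCoverOf_range hU (fun k => hUi k ▸ hopen _ _)
    (fun k => hUi k ▸ hS _ _) fun z hz => ?_⟩
  rcases hS₁₂ hz with hz | hz
  · exact hS₁.eventually_mem hU
      (fun k => ⟨Nat.pair k (i k), (tails_pair u k (i k) _).trans (hUi k).symm⟩) hz
  · filter_upwards [hS₂ z hz] with k hk
    exact hUi k ▸ hk _ ((hi k).trans (Nat.le_add_left _ _))

end GammaCover

section Borel

variable {P : Type u} [TopologicalSpace P]

/-- The covers admitted in `SOneBGammaBGamma`. -/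
def IsCountableBorelGammaCover (ℬ : Set (Set P)) : Prop :=
  ℬ.Countable ∧ ℬ.Infinite ∧ (∀ B ∈ ℬ, MeasurableSet[borel P] B) ∧
    (∀ B ∈ ℬ, ¬ (univ : Set P) ⊆ B) ∧ ∀ y : P, {B ∈ ℬ | y ∉ B}.Finite

theorem SOneBGammaBGamma.exists_select (hP : SOneBGammaBGamma P) {ℬ : ℕ → Set (Set P)}
    (h : ∀ k, IsCountableBorelGammaCover (ℬ k) ∨ univ ∈ ℬ k) :
    ∃ B : ℕ → Set P, (∀ k, B k ∈ ℬ k) ∧ ∀ y, ∀ᶠ k in atTop, y ∈ B k := by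
  classical
  set good := {k | IsCountableBorelGammaCover (ℬ k)}
  by_cases hgood : good.Infinite
  · obtain ⟨B, hB, hB_ev⟩ :=
      hP (fun j => ℬ (Nat.nth (· ∈ good) j)) fun j => Nat.nth_mem_of_infinite hgood j
    refine ⟨fun k => if hk : k ∈ good then B (Nat.count (· ∈ good) k) else univ,
      fun k => ?_, fun y => ?_⟩
    · dsimp only
      split_ifs with hk
      · simpa only [Nat.nth_count hk] using hB (Nat.count (· ∈ good) k)
      · exact (h k).resolve_left hk
    · simp only [← Nat.cofinite_eq_atTop, eventually_cofinite] at hB_ev ⊢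
      refine ((hB_ev y).image (Nat.nth (· ∈ good))).subset fun k hk => ?_
      by_cases hk' : k ∈ good
      · exact ⟨Nat.count (· ∈ good) k, by simpa [hk'] using hk, Nat.nth_count hk'⟩
      · simp [hk'] at hk
  · refine ⟨fun k => if hk : k ∈ good then hk.2.1.nonempty.some else univ, fun k => ?_,
      fun y => ?_⟩
    · dsimp only
      split_ifs with hk
      · exact hk.2.1.nonempty.some_mem
      · exact (h k).resolve_left hk
    · rw [← Nat.cofinite_eq_atTop]
      filter_upwards [(not_infinite.1 hgood).eventually_cofinite_notMem] with k hk
      simp [hk]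

theorem isCountableBorelGammaCover_range_or_univ_mem {B : ℕ → Set P} (hmono : Monotone B)
    (hmeas : ∀ m, MeasurableSet[borel P] (B m)) (hcov : ∀ p, ∃ m, p ∈ B m) :
    IsCountableBorelGammaCover (range B) ∨ univ ∈ range B := by
  by_cases huniv : univ ∈ range B
  · exact Or.inr huniv
  refine Or.inl ⟨countable_range B, fun hfin => huniv ?_, forall_mem_range.2 hmeas,
    forall_mem_range.2 fun m hm => huniv ⟨m, univ_subset_iff.1 hm⟩, fun p => ?_⟩
  · obtain ⟨m, -, hmax⟩ := Finite.exists_maximalFor' B univ (by rwa [image_univ]) univ_nonempty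
    refine ⟨m, eq_univ_of_forall fun p => ?_⟩
    obtain ⟨m', hm'⟩ := hcov p
    exact hmax (mem_univ (max m m')) (hmono (le_max_left _ _)) (hmono (le_max_right _ _) hm')
  · obtain ⟨M, hM⟩ := hcov p
    refine ((finite_Iio M).image B).subset ?_
    rintro _ ⟨⟨m, rfl⟩, hpm⟩
    exact ⟨m, lt_of_not_ge fun hle => hpm (hmono hle hM), rfl⟩

theorem SOneBGammaBGamma.exists_eventually_forall_ge_mem (hP : SOneBGammaBGamma P)
    {w : ℕ → ℕ → Set P} (hw : ∀ k j, MeasurableSet[borel P] (w k j))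
    (hev : ∀ p k, ∀ᶠ j in atTop, p ∈ w k j) :
    ∃ g : ℕ → ℕ, ∀ p, ∀ᶠ k in atTop, ∀ j ≥ g k, p ∈ w k j := by
  let _ : MeasurableSpace P := borel P
  obtain ⟨C, hC, hC_ev⟩ := hP.exists_select fun k =>
    isCountableBorelGammaCover_range_or_univ_mem (B := fun m => ⋂ j ∈ Ici m, w k j)
      (fun _ _ hm => biInter_mono (Ici_subset_Ici.2 hm) fun _ _ => subset_rfl)
      (fun m => MeasurableSet.biInter (to_countable _) fun j _ => hw k j)
      fun p => by simpa only [mem_iInter₂, mem_Ici] using eventually_atTop.1 (hev p k)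
  choose g hg using hC
  refine ⟨g, fun p => ?_⟩
  filter_upwards [hC_ev p] with k hk
  simpa only [← hg, mem_iInter₂, mem_Ici] using hk

end Borel

/-- Let `T = {x_α : α < 𝔟}` be an unbounded tower and `Y` a space such that every product
`{x_ξ : ξ < α} × Y` (for `α < 𝔟`) satisfies `S₁(B_Γ,B_Γ)`. If from every sequence of
countable γ-covers of `(T ∪ Fin) × Y` one can select single members forming a γ-cover of
`A × Y` for some `A ⊇ Fin` with `|T ∖ A| < 𝔟`, then `(T ∪ Fin) × Y` satisfies `S₁(Γ,Γ)`. -/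
theorem stmt18 (Y : Type u) [TopologicalSpace Y]
    (x : Ordinal.{0} → (ℕ → Bool))
    (hinf : ∀ α < bCardinal.ord, {n | x α n = true}.Infinite)
    (htower : ∀ α β : Ordinal.{0}, α < β → β < bCardinal.ord →
      {n | x β n = true ∧ x α n = false}.Finite)
    (hunb : ¬ ∃ g : ℕ → ℕ, ∀ α < bCardinal.ord,
      ∀ᶠ n in atTop, Nat.nth (fun k => x α k = true) n ≤ g n)
    (T X : Set (ℕ → Bool))
    (hT : T = x '' {α | α < bCardinal.ord}) (hX : X = T ∪ finSupp)
    (hY : ∀ α < bCardinal.ord, SOneBGammaBGamma (↥(x '' {ξ | ξ < α}) × Y))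
    (hmain : ∀ V : ℕ → ℕ → Set (↥X × Y),
      (∀ k, IsGammaCoverOf (Set.univ : Set (↥X × Y)) (Set.range (V k))) →
      ∃ n : ℕ → ℕ, ∃ A : Set (ℕ → Bool), finSupp ⊆ A ∧ A ⊆ X ∧
        Cardinal.mk ↥(T \ A) < bCardinal ∧
        IsGammaCoverOf {z : ↥X × Y | ↑z.1 ∈ A} (Set.range fun k => V k (n k))) :
    SOneGammaGamma (↥X × Y) := by
  intro 𝒰 h𝒰
  choose u hu hu𝒰 using fun k => (h𝒰 k).exists_injective
  have hopen k m : IsOpen (u k m) := (h𝒰 k).2.1 _ (hu𝒰 k m)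
  have hnot k m : ¬ univ ⊆ u k m := (h𝒰 k).2.2.1 _ (hu𝒰 k m)
  have hev z k : ∀ᶠ m in atTop, z ∈ u k m := (h𝒰 k).eventually_mem (hu k) (hu𝒰 k) (mem_univ z)
  obtain ⟨n, A, hFinA, -, hcard, hA⟩ :=
    hmain (tails u) (isGammaCoverOf_tails hu hopen hnot fun z _ => hev z)
  obtain ⟨α, hα, hTA⟩ :=
    exists_lt_subset_image_Iio_of_mk_lt_bCardinal hinf htower hunb (hT ▸ sdiff_subset) hcard
  have hPX : x '' {ξ | ξ < α} ⊆ X :=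
    hX ▸ hT ▸ (image_mono fun ξ hξ => lt_trans hξ hα).trans subset_union_left
  let ι : ↥(x '' {ξ | ξ < α}) × Y → ↥X × Y := Prod.map (inclusion hPX) id
  have hι : Continuous ι := (continuous_inclusion hPX).prodMap continuous_id
  obtain ⟨g, hg⟩ := (hY α hα).exists_eventually_forall_ge_mem (w := fun k j => ι ⁻¹' u k j)
    (fun k j => MeasurableSpace.measurableSet_generateFrom ((hopen k j).preimage hι))
    fun p k => hev (ι p) k
  have hsmall : ∀ z ∈ {z : ↥X × Y | ↑z.1 ∈ x '' {ξ | ξ < α}},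
      ∀ᶠ k in atTop, ∀ j ≥ g k, z ∈ u k j := fun z hz => hg (⟨z.1, hz⟩, z.2)
  have hcover : univ ⊆ {z : ↥X × Y | ↑z.1 ∈ A} ∪ {z | ↑z.1 ∈ x '' {ξ | ξ < α}} := by
    intro z _
    by_cases hzA : ↑z.1 ∈ A
    · exact Or.inl hzA
    · have hzT : ↑z.1 ∈ T := (hX ▸ z.1.2 : ↑z.1 ∈ T ∪ finSupp).resolve_right (hzA ∘ (hFinA ·))
      exact Or.inr (hTA ⟨hzT, hzA⟩)
  obtain ⟨U, hU𝒰, hU⟩ := exists_isGammaCoverOf_of_tails hu hopen hnot hA hsmall hcover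
  exact ⟨U, fun k => (hU𝒰 k).elim fun m hm => hm ▸ hu𝒰 k m, hU⟩
end
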